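/- Let F : 𝔸 → ℂ and G : 𝔹 → ℂ be strict functors between weak double categories. Then the set-theoretical pullback of F and G on objects, horizontal arrows, vertical arrows and double cells defines a weak double category 𝔸 ×_ℂ 𝔹 which is the 2-pullback of F and G in the 2-category LxDbl of weak double categories, lax double functors and horizontal transformations; moreover the two projection functors onto 𝔸 and 𝔹 are strict functors. -/
import Mathlib


/-!
Core definitions: weak double categories (pseudocategories in `Cat`), lax and
colax double functors, strict functors, horizontal transformations, and the
double cells of the strict double category `Dbl` of Grandis–Paré.
-/

universe u u₀ v₀ v₁ v₂

/-- The underlying data (carriers) of a double category: objects, horizontal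
arrows, vertical arrows and double cells. -/
structure DblData : Type (u + 1) where
  Obj : Type u
  Hor : Obj → Obj → Type u
  Ver : Obj → Obj → Type u
  Cell : ∀ {A B A' B' : Obj}, Hor A B → Ver A A' → Ver B B' → Hor A' B' → Type u

/-- A weak double category: a pseudocategory in `Cat`.  The horizontal
(transversal) direction is a strict category; vertical composition is
associative and unitary up to coherent special isomorphisms `vassoc`, `lunit`,
`runit` (satisfying naturality, the pentagon and the triangle). -/
structure WeakDoubleCat extends DblData.{u} : Type (u + 1) where
  hid : ∀ A, Hor A A
  hcomp : ∀ {A B C}, Hor A B → Hor B C → Hor A C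
  hid_comp : ∀ {A B} (f : Hor A B), hcomp (hid A) f = f
  hcomp_id : ∀ {A B} (f : Hor A B), hcomp f (hid B) = f
  hassoc : ∀ {A B C D} (f : Hor A B) (g : Hor B C) (h : Hor C D),
    hcomp (hcomp f g) h = hcomp f (hcomp g h)
  /-- identity double cell on a vertical arrow (for horizontal composition) -/
  cid : ∀ {A A'} (u : Ver A A'), Cell (hid A) u u (hid A')
  /-- horizontal (strict) composition of double cells -/
  chcomp : ∀ {A B C A' B' C'} {f : Hor A B} {g : Hor B C}
    {u : Ver A A'} {v : Ver B B'} {w : Ver C C'} {f' : Hor A' B'} {g' : Hor B' C'},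
    Cell f u v f' → Cell g v w g' → Cell (hcomp f g) u w (hcomp f' g')
  cid_chcomp : ∀ {A B A' B'} {f : Hor A B} {u : Ver A A'} {v : Ver B B'} {f' : Hor A' B'}
    (α : Cell f u v f'), HEq (chcomp (cid u) α) α
  chcomp_cid : ∀ {A B A' B'} {f : Hor A B} {u : Ver A A'} {v : Ver B B'} {f' : Hor A' B'}
    (α : Cell f u v f'), HEq (chcomp α (cid v)) α
  chcomp_assoc : ∀ {A B C D A' B' C' D'} {f : Hor A B} {g : Hor B C} {h : Hor C D}
    {u : Ver A A'} {v : Ver B B'} {w : Ver C C'} {x : Ver D D'}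
    {f' : Hor A' B'} {g' : Hor B' C'} {h' : Hor C' D'}
    (α : Cell f u v f') (β : Cell g v w g') (γ : Cell h w x h'),
    HEq (chcomp (chcomp α β) γ) (chcomp α (chcomp β γ))
  vid : ∀ A, Ver A A
  vcomp : ∀ {A B C}, Ver A B → Ver B C → Ver A C
  /-- identity double cell on a horizontal arrow (for vertical composition) -/
  idcell : ∀ {A B} (f : Hor A B), Cell f (vid A) (vid B) f
  /-- vertical composition of double cells -/
  cvcomp : ∀ {A B A' B' A'' B''} {f : Hor A B} {u : Ver A A'} {v : Ver B B'} {g : Hor A' B'}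
    {u' : Ver A' A''} {v' : Ver B' B''} {h : Hor A'' B''},
    Cell f u v g → Cell g u' v' h → Cell f (vcomp u u') (vcomp v v') h
  idcell_hid : ∀ A, idcell (hid A) = cid (vid A)
  idcell_hcomp : ∀ {A B C} (f : Hor A B) (g : Hor B C),
    idcell (hcomp f g) = chcomp (idcell f) (idcell g)
  cid_vcomp : ∀ {A B C} (u : Ver A B) (u' : Ver B C),
    cvcomp (cid u) (cid u') = cid (vcomp u u')
  interchange : ∀ {A B C A' B' C' A'' B'' C''}
    {t₁ : Hor A B} {t₂ : Hor B C} {u₀ : Ver A A'} {u₁ : Ver B B'} {u₂ : Ver C C'}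
    {m₁ : Hor A' B'} {m₂ : Hor B' C'} {w₀ : Ver A' A''} {w₁ : Ver B' B''} {w₂ : Ver C' C''}
    {b₁ : Hor A'' B''} {b₂ : Hor B'' C''}
    (α : Cell t₁ u₀ u₁ m₁) (β : Cell t₂ u₁ u₂ m₂)
    (γ : Cell m₁ w₀ w₁ b₁) (δ : Cell m₂ w₁ w₂ b₂),
    chcomp (cvcomp α γ) (cvcomp β δ) = cvcomp (chcomp α β) (chcomp γ δ)
  /-- associativity special isomorphism for vertical composition -/
  vassoc : ∀ {A B C D} (u : Ver A B) (v : Ver B C) (w : Ver C D),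
    Cell (hid A) (vcomp u (vcomp v w)) (vcomp (vcomp u v) w) (hid D)
  vassocInv : ∀ {A B C D} (u : Ver A B) (v : Ver B C) (w : Ver C D),
    Cell (hid A) (vcomp (vcomp u v) w) (vcomp u (vcomp v w)) (hid D)
  vassoc_vassocInv : ∀ {A B C D} (u : Ver A B) (v : Ver B C) (w : Ver C D),
    HEq (chcomp (vassoc u v w) (vassocInv u v w)) (cid (vcomp u (vcomp v w)))
  vassocInv_vassoc : ∀ {A B C D} (u : Ver A B) (v : Ver B C) (w : Ver C D),
    HEq (chcomp (vassocInv u v w) (vassoc u v w)) (cid (vcomp (vcomp u v) w))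
  /-- left unit special isomorphism -/
  lunit : ∀ {A B} (u : Ver A B), Cell (hid A) (vcomp (vid A) u) u (hid B)
  lunitInv : ∀ {A B} (u : Ver A B), Cell (hid A) u (vcomp (vid A) u) (hid B)
  lunit_lunitInv : ∀ {A B} (u : Ver A B),
    HEq (chcomp (lunit u) (lunitInv u)) (cid (vcomp (vid A) u))
  lunitInv_lunit : ∀ {A B} (u : Ver A B), HEq (chcomp (lunitInv u) (lunit u)) (cid u)
  /-- right unit special isomorphism -/
  runit : ∀ {A B} (u : Ver A B), Cell (hid A) (vcomp u (vid B)) u (hid B)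
  runitInv : ∀ {A B} (u : Ver A B), Cell (hid A) u (vcomp u (vid B)) (hid B)
  runit_runitInv : ∀ {A B} (u : Ver A B),
    HEq (chcomp (runit u) (runitInv u)) (cid (vcomp u (vid B)))
  runitInv_runit : ∀ {A B} (u : Ver A B), HEq (chcomp (runitInv u) (runit u)) (cid u)
  vassoc_nat : ∀ {A₀ B₀ A₁ B₁ A₂ B₂ A₃ B₃}
    {g₀ : Hor A₀ B₀} {g₁ : Hor A₁ B₁} {g₂ : Hor A₂ B₂} {g₃ : Hor A₃ B₃}
    {a₁ : Ver A₀ A₁} {a₂ : Ver A₁ A₂} {a₃ : Ver A₂ A₃}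
    {b₁ : Ver B₀ B₁} {b₂ : Ver B₁ B₂} {b₃ : Ver B₂ B₃}
    (α : Cell g₀ a₁ b₁ g₁) (β : Cell g₁ a₂ b₂ g₂) (γ : Cell g₂ a₃ b₃ g₃),
    HEq (chcomp (vassoc a₁ a₂ a₃) (cvcomp (cvcomp α β) γ))
        (chcomp (cvcomp α (cvcomp β γ)) (vassoc b₁ b₂ b₃))
  lunit_nat : ∀ {A B A' B'} {f : Hor A B} {u : Ver A A'} {v : Ver B B'} {g : Hor A' B'}
    (α : Cell f u v g),
    HEq (chcomp (lunit u) α) (chcomp (cvcomp (idcell f) α) (lunit v))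
  runit_nat : ∀ {A B A' B'} {f : Hor A B} {u : Ver A A'} {v : Ver B B'} {g : Hor A' B'}
    (α : Cell f u v g),
    HEq (chcomp (runit u) α) (chcomp (cvcomp α (idcell g)) (runit v))
  pentagon : ∀ {A B C D E} (u : Ver A B) (v : Ver B C) (w : Ver C D) (x : Ver D E),
    HEq (chcomp (vassoc u v (vcomp w x)) (vassoc (vcomp u v) w x))
        (chcomp (cvcomp (cid u) (vassoc v w x))
          (chcomp (vassoc u (vcomp v w) x) (cvcomp (vassoc u v w) (cid x))))
  triangle : ∀ {A B C} (u : Ver A B) (v : Ver B C),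
    HEq (chcomp (vassoc u (vid B) v) (cvcomp (runit u) (cid v)))
        (cvcomp (cid u) (lunit v))

/-- A lax (double) functor between weak double categories: strictly functorial
in the horizontal direction, with comparison special cells `laxid` and
`laxcomp` for the vertical identities and compositions, natural and satisfying
the unit and associativity coherence conditions. -/
structure LaxDblFunctor (X Y : WeakDoubleCat.{u}) : Type u where
  obj : X.Obj → Y.Obj
  hmap : ∀ {A B}, X.Hor A B → Y.Hor (obj A) (obj B)
  vmap : ∀ {A B}, X.Ver A B → Y.Ver (obj A) (obj B)
  cmap : ∀ {A B A' B'} {f : X.Hor A B} {u : X.Ver A A'} {v : X.Ver B B'} {g : X.Hor A' B'},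
    X.Cell f u v g → Y.Cell (hmap f) (vmap u) (vmap v) (hmap g)
  hmap_id : ∀ A, hmap (X.hid A) = Y.hid (obj A)
  hmap_comp : ∀ {A B C} (f : X.Hor A B) (g : X.Hor B C),
    hmap (X.hcomp f g) = Y.hcomp (hmap f) (hmap g)
  cmap_cid : ∀ {A A'} (u : X.Ver A A'), HEq (cmap (X.cid u)) (Y.cid (vmap u))
  cmap_chcomp : ∀ {A B C A' B' C'} {f : X.Hor A B} {g : X.Hor B C}
    {u : X.Ver A A'} {v : X.Ver B B'} {w : X.Ver C C'} {f' : X.Hor A' B'} {g' : X.Hor B' C'}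
    (α : X.Cell f u v f') (β : X.Cell g v w g'),
    HEq (cmap (X.chcomp α β)) (Y.chcomp (cmap α) (cmap β))
  laxid : ∀ A, Y.Cell (Y.hid (obj A)) (Y.vid (obj A)) (vmap (X.vid A)) (Y.hid (obj A))
  laxcomp : ∀ {A B C} (u : X.Ver A B) (v : X.Ver B C),
    Y.Cell (Y.hid (obj A)) (Y.vcomp (vmap u) (vmap v)) (vmap (X.vcomp u v)) (Y.hid (obj C))
  laxid_nat : ∀ {A B} (f : X.Hor A B),
    HEq (Y.chcomp (laxid A) (cmap (X.idcell f))) (Y.chcomp (Y.idcell (hmap f)) (laxid B))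
  laxcomp_nat : ∀ {A B A' B' A'' B''} {f : X.Hor A B} {u : X.Ver A A'} {v : X.Ver B B'}
    {g : X.Hor A' B'} {u' : X.Ver A' A''} {v' : X.Ver B' B''} {h : X.Hor A'' B''}
    (α : X.Cell f u v g) (β : X.Cell g u' v' h),
    HEq (Y.chcomp (laxcomp u u') (cmap (X.cvcomp α β)))
        (Y.chcomp (Y.cvcomp (cmap α) (cmap β)) (laxcomp v v'))
  lax_lunit : ∀ {A B} (u : X.Ver A B),
    HEq (Y.chcomp (Y.cvcomp (laxid A) (Y.cid (vmap u)))
          (Y.chcomp (laxcomp (X.vid A) u) (cmap (X.lunit u))))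
        (Y.lunit (vmap u))
  lax_runit : ∀ {A B} (u : X.Ver A B),
    HEq (Y.chcomp (Y.cvcomp (Y.cid (vmap u)) (laxid B))
          (Y.chcomp (laxcomp u (X.vid B)) (cmap (X.runit u))))
        (Y.runit (vmap u))
  lax_assoc : ∀ {A B C D} (u : X.Ver A B) (v : X.Ver B C) (w : X.Ver C D),
    HEq (Y.chcomp (Y.vassoc (vmap u) (vmap v) (vmap w))
          (Y.chcomp (Y.cvcomp (laxcomp u v) (Y.cid (vmap w))) (laxcomp (X.vcomp u v) w)))
        (Y.chcomp (Y.cvcomp (Y.cid (vmap u)) (laxcomp v w))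
          (Y.chcomp (laxcomp u (X.vcomp v w)) (cmap (X.vassoc u v w))))

/-- A lax double functor is strict when its comparison cells are identities. -/
def LaxDblFunctor.IsStrict {X Y : WeakDoubleCat.{u}} (F : LaxDblFunctor X Y) : Prop :=
  (∀ A, F.vmap (X.vid A) = Y.vid (F.obj A)) ∧
  (∀ {A B C} (u : X.Ver A B) (v : X.Ver B C),
    F.vmap (X.vcomp u v) = Y.vcomp (F.vmap u) (F.vmap v)) ∧
  (∀ A, HEq (F.laxid A) (Y.cid (Y.vid (F.obj A)))) ∧
  (∀ {A B C} (u : X.Ver A B) (v : X.Ver B C),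
    HEq (F.laxcomp u v) (Y.cid (Y.vcomp (F.vmap u) (F.vmap v))))

/-- A colax (double) functor: as a lax one but with the comparison special
cells in the opposite direction. -/
structure ColaxDblFunctor (X Y : WeakDoubleCat.{u}) : Type u where
  obj : X.Obj → Y.Obj
  hmap : ∀ {A B}, X.Hor A B → Y.Hor (obj A) (obj B)
  vmap : ∀ {A B}, X.Ver A B → Y.Ver (obj A) (obj B)
  cmap : ∀ {A B A' B'} {f : X.Hor A B} {u : X.Ver A A'} {v : X.Ver B B'} {g : X.Hor A' B'},
    X.Cell f u v g → Y.Cell (hmap f) (vmap u) (vmap v) (hmap g)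
  hmap_id : ∀ A, hmap (X.hid A) = Y.hid (obj A)
  hmap_comp : ∀ {A B C} (f : X.Hor A B) (g : X.Hor B C),
    hmap (X.hcomp f g) = Y.hcomp (hmap f) (hmap g)
  cmap_cid : ∀ {A A'} (u : X.Ver A A'), HEq (cmap (X.cid u)) (Y.cid (vmap u))
  cmap_chcomp : ∀ {A B C A' B' C'} {f : X.Hor A B} {g : X.Hor B C}
    {u : X.Ver A A'} {v : X.Ver B B'} {w : X.Ver C C'} {f' : X.Hor A' B'} {g' : X.Hor B' C'}
    (α : X.Cell f u v f') (β : X.Cell g v w g'),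
    HEq (cmap (X.chcomp α β)) (Y.chcomp (cmap α) (cmap β))
  colaxid : ∀ A, Y.Cell (Y.hid (obj A)) (vmap (X.vid A)) (Y.vid (obj A)) (Y.hid (obj A))
  colaxcomp : ∀ {A B C} (u : X.Ver A B) (v : X.Ver B C),
    Y.Cell (Y.hid (obj A)) (vmap (X.vcomp u v)) (Y.vcomp (vmap u) (vmap v)) (Y.hid (obj C))
  colaxid_nat : ∀ {A B} (f : X.Hor A B),
    HEq (Y.chcomp (cmap (X.idcell f)) (colaxid B)) (Y.chcomp (colaxid A) (Y.idcell (hmap f)))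
  colaxcomp_nat : ∀ {A B A' B' A'' B''} {f : X.Hor A B} {u : X.Ver A A'} {v : X.Ver B B'}
    {g : X.Hor A' B'} {u' : X.Ver A' A''} {v' : X.Ver B' B''} {h : X.Hor A'' B''}
    (α : X.Cell f u v g) (β : X.Cell g u' v' h),
    HEq (Y.chcomp (cmap (X.cvcomp α β)) (colaxcomp v v'))
        (Y.chcomp (colaxcomp u u') (Y.cvcomp (cmap α) (cmap β)))
  colax_lunit : ∀ {A B} (u : X.Ver A B),
    HEq (Y.chcomp (colaxcomp (X.vid A) u)
          (Y.chcomp (Y.cvcomp (colaxid A) (Y.cid (vmap u))) (Y.lunit (vmap u))))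
        (cmap (X.lunit u))
  colax_runit : ∀ {A B} (u : X.Ver A B),
    HEq (Y.chcomp (colaxcomp u (X.vid B))
          (Y.chcomp (Y.cvcomp (Y.cid (vmap u)) (colaxid B)) (Y.runit (vmap u))))
        (cmap (X.runit u))
  colax_assoc : ∀ {A B C D} (u : X.Ver A B) (v : X.Ver B C) (w : X.Ver C D),
    HEq (Y.chcomp (cmap (X.vassoc u v w))
          (Y.chcomp (colaxcomp (X.vcomp u v) w) (Y.cvcomp (colaxcomp u v) (Y.cid (vmap w)))))
        (Y.chcomp (colaxcomp u (X.vcomp v w))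
          (Y.chcomp (Y.cvcomp (Y.cid (vmap u)) (colaxcomp v w))
            (Y.vassoc (vmap u) (vmap v) (vmap w))))

/-- A colax double functor is strict when its comparison cells are identities. -/
def ColaxDblFunctor.IsStrict {X Y : WeakDoubleCat.{u}} (F : ColaxDblFunctor X Y) : Prop :=
  (∀ A, F.vmap (X.vid A) = Y.vid (F.obj A)) ∧
  (∀ {A B C} (u : X.Ver A B) (v : X.Ver B C),
    F.vmap (X.vcomp u v) = Y.vcomp (F.vmap u) (F.vmap v)) ∧
  (∀ A, HEq (F.colaxid A) (Y.cid (Y.vid (F.obj A)))) ∧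
  (∀ {A B C} (u : X.Ver A B) (v : X.Ver B C),
    HEq (F.colaxcomp u v) (Y.cid (Y.vcomp (F.vmap u) (F.vmap v))))

/-- Horizontal transformation between lax double functors: the 2-cells of the
2-category `LxDbl`. -/
structure HorizTransf {X Y : WeakDoubleCat.{u}} (F G : LaxDblFunctor X Y) : Type u where
  app : ∀ A, Y.Hor (F.obj A) (G.obj A)
  cellapp : ∀ {A B} (u : X.Ver A B), Y.Cell (app A) (F.vmap u) (G.vmap u) (app B)
  hnat : ∀ {A B} (f : X.Hor A B), Y.hcomp (F.hmap f) (app B) = Y.hcomp (app A) (G.hmap f)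
  cellnat : ∀ {A B A' B'} {f : X.Hor A B} {u : X.Ver A A'} {v : X.Ver B B'} {g : X.Hor A' B'}
    (α : X.Cell f u v g),
    HEq (Y.chcomp (F.cmap α) (cellapp v)) (Y.chcomp (cellapp u) (G.cmap α))
  unit_compat : ∀ A,
    HEq (Y.chcomp (F.laxid A) (cellapp (X.vid A)))
        (Y.chcomp (Y.idcell (app A)) (G.laxid A))
  comp_compat : ∀ {A B C} (u : X.Ver A B) (v : X.Ver B C),
    HEq (Y.chcomp (F.laxcomp u v) (cellapp (X.vcomp u v)))
        (Y.chcomp (Y.cvcomp (cellapp u) (cellapp v)) (G.laxcomp u v))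

/-- Horizontal transformation between colax double functors: the 2-cells of
the 2-category `CxDbl`. -/
structure CHorizTransf {X Y : WeakDoubleCat.{u}} (F G : ColaxDblFunctor X Y) : Type u where
  app : ∀ A, Y.Hor (F.obj A) (G.obj A)
  cellapp : ∀ {A B} (u : X.Ver A B), Y.Cell (app A) (F.vmap u) (G.vmap u) (app B)
  hnat : ∀ {A B} (f : X.Hor A B), Y.hcomp (F.hmap f) (app B) = Y.hcomp (app A) (G.hmap f)
  cellnat : ∀ {A B A' B'} {f : X.Hor A B} {u : X.Ver A A'} {v : X.Ver B B'} {g : X.Hor A' B'}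
    (α : X.Cell f u v g),
    HEq (Y.chcomp (F.cmap α) (cellapp v)) (Y.chcomp (cellapp u) (G.cmap α))
  unit_compat : ∀ A,
    HEq (Y.chcomp (F.colaxid A) (Y.idcell (app A)))
        (Y.chcomp (cellapp (X.vid A)) (G.colaxid A))
  comp_compat : ∀ {A B C} (u : X.Ver A B) (v : X.Ver B C),
    HEq (Y.chcomp (F.colaxcomp u v) (Y.cvcomp (cellapp u) (cellapp v)))
        (Y.chcomp (cellapp (X.vcomp u v)) (G.colaxcomp u v))

/-- A double cell of the strict double category `Dbl`:  `F, G` are lax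
functors (horizontal arrows), `U, V` colax functors (vertical arrows), and
the cell is a transformation `V F ⇒ G U` compatible with all the structure. -/
structure DblCellGP {XA XB XC XD : WeakDoubleCat.{u}}
    (F : LaxDblFunctor XA XB) (G : LaxDblFunctor XC XD)
    (U : ColaxDblFunctor XA XC) (V : ColaxDblFunctor XB XD) : Type u where
  app : ∀ A, XD.Hor (V.obj (F.obj A)) (G.obj (U.obj A))
  cellapp : ∀ {A B} (u : XA.Ver A B),
    XD.Cell (app A) (V.vmap (F.vmap u)) (G.vmap (U.vmap u)) (app B)
  hnat : ∀ {A B} (f : XA.Hor A B),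
    XD.hcomp (V.hmap (F.hmap f)) (app B) = XD.hcomp (app A) (G.hmap (U.hmap f))
  cellnat : ∀ {A B A' B'} {f : XA.Hor A B} {u : XA.Ver A A'} {v : XA.Ver B B'}
    {g : XA.Hor A' B'} (α : XA.Cell f u v g),
    HEq (XD.chcomp (V.cmap (F.cmap α)) (cellapp v))
        (XD.chcomp (cellapp u) (G.cmap (U.cmap α)))
  unit_compat : ∀ A,
    HEq (XD.chcomp (V.cmap (F.laxid A))
          (XD.chcomp (cellapp (XA.vid A)) (G.cmap (U.colaxid A))))
        (XD.chcomp (V.colaxid (F.obj A))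
          (XD.chcomp (XD.idcell (app A)) (G.laxid (U.obj A))))
  comp_compat : ∀ {A B C} (u : XA.Ver A B) (v : XA.Ver B C),
    HEq (XD.chcomp (V.cmap (F.laxcomp u v))
          (XD.chcomp (cellapp (XA.vcomp u v)) (G.cmap (U.colaxcomp u v))))
        (XD.chcomp (V.colaxcomp (F.vmap u) (F.vmap v))
          (XD.chcomp (XD.cvcomp (cellapp u) (cellapp v))
            (G.laxcomp (U.vmap u) (U.vmap v))))

/-- A cell of `Dbl` is (horizontally) strict if its horizontal boundaries are
strict functors and it is a horizontal identity on objects and vertical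
arrows, i.e. `V F = G U`. -/
def DblCellGP.IsStrict {XA XB XC XD : WeakDoubleCat.{u}}
    {F : LaxDblFunctor XA XB} {G : LaxDblFunctor XC XD}
    {U : ColaxDblFunctor XA XC} {V : ColaxDblFunctor XB XD}
    (π : DblCellGP F G U V) : Prop :=
  F.IsStrict ∧ G.IsStrict ∧
  (∀ A, V.obj (F.obj A) = G.obj (U.obj A)) ∧
  (∀ {A B} (f : XA.Hor A B), HEq (V.hmap (F.hmap f)) (G.hmap (U.hmap f))) ∧
  (∀ {A B} (u : XA.Ver A B), HEq (V.vmap (F.vmap u)) (G.vmap (U.vmap u))) ∧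
  (∀ {A B A' B'} {f : XA.Hor A B} {u : XA.Ver A A'} {v : XA.Ver B B'} {g : XA.Hor A' B'}
    (α : XA.Cell f u v g), HEq (V.cmap (F.cmap α)) (G.cmap (U.cmap α))) ∧
  (∀ A, HEq (π.app A) (XD.hid (V.obj (F.obj A)))) ∧
  (∀ {A B} (u : XA.Ver A B), HEq (π.cellapp u) (XD.cid (V.vmap (F.vmap u))))

/-- `H` is the composite `F' ∘ F` of the lax functors `F` and `F'`, expressed
componentwise. -/
def LaxCompSpec {X Y Z : WeakDoubleCat.{u}} (F : LaxDblFunctor X Y)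
    (F' : LaxDblFunctor Y Z) (H : LaxDblFunctor X Z) : Prop :=
  (∀ A, H.obj A = F'.obj (F.obj A)) ∧
  (∀ {A B} (f : X.Hor A B), HEq (H.hmap f) (F'.hmap (F.hmap f))) ∧
  (∀ {A B} (u : X.Ver A B), HEq (H.vmap u) (F'.vmap (F.vmap u))) ∧
  (∀ {A B A' B'} {f : X.Hor A B} {u : X.Ver A A'} {v : X.Ver B B'} {g : X.Hor A' B'}
    (α : X.Cell f u v g), HEq (H.cmap α) (F'.cmap (F.cmap α))) ∧
  (∀ A, HEq (H.laxid A) (Z.chcomp (F'.laxid (F.obj A)) (F'.cmap (F.laxid A)))) ∧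
  (∀ {A B C} (u : X.Ver A B) (v : X.Ver B C),
    HEq (H.laxcomp u v)
      (Z.chcomp (F'.laxcomp (F.vmap u) (F.vmap v)) (F'.cmap (F.laxcomp u v))))

/-- `H` is the composite `F' ∘ F` of the colax functors `F` and `F'`. -/
def ColaxCompSpec {X Y Z : WeakDoubleCat.{u}} (F : ColaxDblFunctor X Y)
    (F' : ColaxDblFunctor Y Z) (H : ColaxDblFunctor X Z) : Prop :=
  (∀ A, H.obj A = F'.obj (F.obj A)) ∧
  (∀ {A B} (f : X.Hor A B), HEq (H.hmap f) (F'.hmap (F.hmap f))) ∧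
  (∀ {A B} (u : X.Ver A B), HEq (H.vmap u) (F'.vmap (F.vmap u))) ∧
  (∀ {A B A' B'} {f : X.Hor A B} {u : X.Ver A A'} {v : X.Ver B B'} {g : X.Hor A' B'}
    (α : X.Cell f u v g), HEq (H.cmap α) (F'.cmap (F.cmap α))) ∧
  (∀ A, HEq (H.colaxid A) (Z.chcomp (F'.cmap (F.colaxid A)) (F'.colaxid (F.obj A)))) ∧
  (∀ {A B C} (u : X.Ver A B) (v : X.Ver B C),
    HEq (H.colaxcomp u v)
      (Z.chcomp (F'.cmap (F.colaxcomp u v)) (F'.colaxcomp (F.vmap u) (F.vmap v))))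

/-- `F` is the identity lax functor of `X`, expressed componentwise. -/
def LaxIdSpec {X : WeakDoubleCat.{u}} (F : LaxDblFunctor X X) : Prop :=
  (∀ A, F.obj A = A) ∧
  (∀ {A B} (f : X.Hor A B), HEq (F.hmap f) f) ∧
  (∀ {A B} (u : X.Ver A B), HEq (F.vmap u) u) ∧
  (∀ {A B A' B'} {f : X.Hor A B} {u : X.Ver A A'} {v : X.Ver B B'} {g : X.Hor A' B'}
    (α : X.Cell f u v g), HEq (F.cmap α) α) ∧
  (∀ A, HEq (F.laxid A) (X.cid (X.vid A))) ∧
  (∀ {A B C} (u : X.Ver A B) (v : X.Ver B C),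
    HEq (F.laxcomp u v) (X.cid (X.vcomp u v)))

/-- `F` is the identity colax functor of `X`, expressed componentwise. -/
def ColaxIdSpec {X : WeakDoubleCat.{u}} (F : ColaxDblFunctor X X) : Prop :=
  (∀ A, F.obj A = A) ∧
  (∀ {A B} (f : X.Hor A B), HEq (F.hmap f) f) ∧
  (∀ {A B} (u : X.Ver A B), HEq (F.vmap u) u) ∧
  (∀ {A B A' B'} {f : X.Hor A B} {u : X.Ver A A'} {v : X.Ver B B'} {g : X.Hor A' B'}
    (α : X.Cell f u v g), HEq (F.cmap α) α) ∧
  (∀ A, HEq (F.colaxid A) (X.cid (X.vid A))) ∧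
  (∀ {A B C} (u : X.Ver A B) (v : X.Ver B C),
    HEq (F.colaxcomp u v) (X.cid (X.vcomp u v)))

/-- `ρ` is the horizontal composite of the `Dbl`-cells `π` and `π'`
(composition along the common vertical boundary `V`), componentwise. -/
def HCompCellSpec {XA XB XC XD XB' XD' : WeakDoubleCat.{u}}
    {F : LaxDblFunctor XA XB} {G : LaxDblFunctor XC XD}
    {U : ColaxDblFunctor XA XC} {V : ColaxDblFunctor XB XD}
    {F' : LaxDblFunctor XB XB'} {G' : LaxDblFunctor XD XD'}
    {W : ColaxDblFunctor XB' XD'}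
    {F₂ : LaxDblFunctor XA XB'} {G₂ : LaxDblFunctor XC XD'}
    (π : DblCellGP F G U V) (π' : DblCellGP F' G' V W)
    (_ : LaxCompSpec F F' F₂) (_ : LaxCompSpec G G' G₂)
    (ρ : DblCellGP F₂ G₂ U W) : Prop :=
  (∀ A, HEq (ρ.app A) (XD'.hcomp (π'.app (F.obj A)) (G'.hmap (π.app A)))) ∧
  (∀ {A B} (u : XA.Ver A B),
    HEq (ρ.cellapp u) (XD'.chcomp (π'.cellapp (F.vmap u)) (G'.cmap (π.cellapp u))))

/-- `ρ` is the vertical composite of the `Dbl`-cells `π` and `σ`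
(composition along the common horizontal boundary `G`), componentwise. -/
def VCompCellSpec {XA XB XC XD XC' XD' : WeakDoubleCat.{u}}
    {F : LaxDblFunctor XA XB} {G : LaxDblFunctor XC XD}
    {U : ColaxDblFunctor XA XC} {V : ColaxDblFunctor XB XD}
    {H : LaxDblFunctor XC' XD'}
    {U' : ColaxDblFunctor XC XC'} {V' : ColaxDblFunctor XD XD'}
    {U₂ : ColaxDblFunctor XA XC'} {V₂ : ColaxDblFunctor XB XD'}
    (π : DblCellGP F G U V) (σ : DblCellGP G H U' V')
    (_ : ColaxCompSpec U U' U₂) (_ : ColaxCompSpec V V' V₂)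
    (ρ : DblCellGP F H U₂ V₂) : Prop :=
  (∀ A, HEq (ρ.app A) (XD'.hcomp (V'.hmap (π.app A)) (σ.app (U.obj A)))) ∧
  (∀ {A B} (u : XA.Ver A B),
    HEq (ρ.cellapp u) (XD'.chcomp (V'.cmap (π.cellapp u)) (σ.cellapp (U.vmap u))))


/-- The set-theoretical pullback of the carriers of two double functors. -/
def pbData {A B C : WeakDoubleCat.{u}} (F : LaxDblFunctor A C) (G : LaxDblFunctor B C) :
    DblData.{u} where
  Obj := {p : A.Obj × B.Obj // F.obj p.1 = G.obj p.2}
  Hor X Y := {p : A.Hor X.1.1 Y.1.1 × B.Hor X.1.2 Y.1.2 // HEq (F.hmap p.1) (G.hmap p.2)}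
  Ver X Y := {p : A.Ver X.1.1 Y.1.1 × B.Ver X.1.2 Y.1.2 // HEq (F.vmap p.1) (G.vmap p.2)}
  Cell f u v g :=
    {p : A.Cell f.1.1 u.1.1 v.1.1 g.1.1 × B.Cell f.1.2 u.1.2 v.1.2 g.1.2 //
      HEq (F.cmap p.1) (G.cmap p.2)}

/-- `P`, with the projections `p` and `q`, is the set-theoretical pullback
weak double category of the two functors `F` and `G` (cf. Proposition 2.1):
its carrier is the set-theoretic pullback and the projections are the strict
product projections. -/
def IsSetPullback {A B C : WeakDoubleCat.{u}} (F : LaxDblFunctor A C) (G : LaxDblFunctor B C)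
    (P : WeakDoubleCat.{u}) (hcar : P.toDblData = pbData F G)
    (p : LaxDblFunctor P A) (q : LaxDblFunctor P B) : Prop :=
  p.IsStrict ∧ q.IsStrict ∧
  (∀ x : P.Obj, p.obj x = (cast (congrArg DblData.Obj hcar) x).val.1) ∧
  (∀ x : P.Obj, q.obj x = (cast (congrArg DblData.Obj hcar) x).val.2) ∧
  HEq (@LaxDblFunctor.hmap P A p)
    (fun (X Y : (pbData F G).Obj) (f : (pbData F G).Hor X Y) => f.val.1) ∧
  HEq (@LaxDblFunctor.hmap P B q)
    (fun (X Y : (pbData F G).Obj) (f : (pbData F G).Hor X Y) => f.val.2) ∧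
  HEq (@LaxDblFunctor.vmap P A p)
    (fun (X Y : (pbData F G).Obj) (u : (pbData F G).Ver X Y) => u.val.1) ∧
  HEq (@LaxDblFunctor.vmap P B q)
    (fun (X Y : (pbData F G).Obj) (u : (pbData F G).Ver X Y) => u.val.2) ∧
  HEq (@LaxDblFunctor.cmap P A p)
    (fun (X Y X' Y' : (pbData F G).Obj) (f : (pbData F G).Hor X Y)
      (u : (pbData F G).Ver X X') (v : (pbData F G).Ver Y Y') (g : (pbData F G).Hor X' Y')
      (α : (pbData F G).Cell f u v g) => α.val.1) ∧
  HEq (@LaxDblFunctor.cmap P B q)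
    (fun (X Y X' Y' : (pbData F G).Obj) (f : (pbData F G).Hor X Y)
      (u : (pbData F G).Ver X X') (v : (pbData F G).Ver Y Y') (g : (pbData F G).Hor X' Y')
      (α : (pbData F G).Cell f u v g) => α.val.2)

section Helpers

variable {Y : WeakDoubleCat.{u}}

theorem hid_heq {X X' : Y.Obj} (h : X = X') : HEq (Y.hid X) (Y.hid X') := by subst h; rfl

theorem vid_heq {X X' : Y.Obj} (h : X = X') : HEq (Y.vid X) (Y.vid X') := by subst h; rfl

theorem hcomp_heq {A A₂ B B₂ C C₂ : Y.Obj} (hA : A = A₂) (hB : B = B₂) (hC : C = C₂)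
    {f : Y.Hor A B} {f₂ : Y.Hor A₂ B₂} {g : Y.Hor B C} {g₂ : Y.Hor B₂ C₂}
    (hf : HEq f f₂) (hg : HEq g g₂) : HEq (Y.hcomp f g) (Y.hcomp f₂ g₂) := by
  subst hA; subst hB; subst hC; cases eq_of_heq hf; cases eq_of_heq hg; rfl

theorem vcomp_heq {A A₂ B B₂ C C₂ : Y.Obj} (hA : A = A₂) (hB : B = B₂) (hC : C = C₂)
    {u : Y.Ver A B} {u₂ : Y.Ver A₂ B₂} {v : Y.Ver B C} {v₂ : Y.Ver B₂ C₂}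
    (hu : HEq u u₂) (hv : HEq v v₂) : HEq (Y.vcomp u v) (Y.vcomp u₂ v₂) := by
  subst hA; subst hB; subst hC; cases eq_of_heq hu; cases eq_of_heq hv; rfl

theorem cid_heq {A A₂ B B₂ : Y.Obj} (hA : A = A₂) (hB : B = B₂)
    {u : Y.Ver A B} {u₂ : Y.Ver A₂ B₂} (hu : HEq u u₂) : HEq (Y.cid u) (Y.cid u₂) := by
  subst hA; subst hB; cases eq_of_heq hu; rfl

theorem idcell_heq {A A₂ B B₂ : Y.Obj} (hA : A = A₂) (hB : B = B₂)
    {f : Y.Hor A B} {f₂ : Y.Hor A₂ B₂} (hf : HEq f f₂) :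
    HEq (Y.idcell f) (Y.idcell f₂) := by
  subst hA; subst hB; cases eq_of_heq hf; rfl

theorem chcomp_heq {A B C A' B' C' A₂ B₂ C₂ A₂' B₂' C₂' : Y.Obj}
    (hA : A = A₂) (hB : B = B₂) (hC : C = C₂) (hA' : A' = A₂') (hB' : B' = B₂')
    (hC' : C' = C₂')
    {f : Y.Hor A B} {g : Y.Hor B C} {u : Y.Ver A A'} {v : Y.Ver B B'} {w : Y.Ver C C'}
    {f' : Y.Hor A' B'} {g' : Y.Hor B' C'}
    {f₂ : Y.Hor A₂ B₂} {g₂ : Y.Hor B₂ C₂} {u₂ : Y.Ver A₂ A₂'} {v₂ : Y.Ver B₂ B₂'}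
    {w₂ : Y.Ver C₂ C₂'} {f₂' : Y.Hor A₂' B₂'} {g₂' : Y.Hor B₂' C₂'}
    (hf : HEq f f₂) (hg : HEq g g₂) (hu : HEq u u₂) (hv : HEq v v₂) (hw : HEq w w₂)
    (hf' : HEq f' f₂') (hg' : HEq g' g₂')
    {α : Y.Cell f u v f'} {β : Y.Cell g v w g'}
    {α₂ : Y.Cell f₂ u₂ v₂ f₂'} {β₂ : Y.Cell g₂ v₂ w₂ g₂'}
    (hα : HEq α α₂) (hβ : HEq β β₂) : HEq (Y.chcomp α β) (Y.chcomp α₂ β₂) := by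
  subst hA; subst hB; subst hC; subst hA'; subst hB'; subst hC'
  cases eq_of_heq hf; cases eq_of_heq hg; cases eq_of_heq hu; cases eq_of_heq hv
  cases eq_of_heq hw; cases eq_of_heq hf'; cases eq_of_heq hg'
  cases eq_of_heq hα; cases eq_of_heq hβ; rfl

theorem cvcomp_heq {A B A' B' A'' B'' A₂ B₂ A₂' B₂' A₂'' B₂'' : Y.Obj}
    (hA : A = A₂) (hB : B = B₂) (hA' : A' = A₂') (hB' : B' = B₂')
    (hA'' : A'' = A₂'') (hB'' : B'' = B₂'')
    {f : Y.Hor A B} {u : Y.Ver A A'} {v : Y.Ver B B'} {g : Y.Hor A' B'}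
    {u' : Y.Ver A' A''} {v' : Y.Ver B' B''} {h : Y.Hor A'' B''}
    {f₂ : Y.Hor A₂ B₂} {u₂ : Y.Ver A₂ A₂'} {v₂ : Y.Ver B₂ B₂'} {g₂ : Y.Hor A₂' B₂'}
    {u₂' : Y.Ver A₂' A₂''} {v₂' : Y.Ver B₂' B₂''} {h₂ : Y.Hor A₂'' B₂''}
    (hf : HEq f f₂) (hu : HEq u u₂) (hv : HEq v v₂) (hg : HEq g g₂)
    (hu' : HEq u' u₂') (hv' : HEq v' v₂') (hh : HEq h h₂)
    {α : Y.Cell f u v g} {β : Y.Cell g u' v' h}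
    {α₂ : Y.Cell f₂ u₂ v₂ g₂} {β₂ : Y.Cell g₂ u₂' v₂' h₂}
    (hα : HEq α α₂) (hβ : HEq β β₂) : HEq (Y.cvcomp α β) (Y.cvcomp α₂ β₂) := by
  subst hA; subst hB; subst hA'; subst hB'; subst hA''; subst hB''
  cases eq_of_heq hf; cases eq_of_heq hu; cases eq_of_heq hv; cases eq_of_heq hg
  cases eq_of_heq hu'; cases eq_of_heq hv'; cases eq_of_heq hh
  cases eq_of_heq hα; cases eq_of_heq hβ; rfl

theorem vassoc_heq {A B C D A₂ B₂ C₂ D₂ : Y.Obj}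
    (hA : A = A₂) (hB : B = B₂) (hC : C = C₂) (hD : D = D₂)
    {u : Y.Ver A B} {v : Y.Ver B C} {w : Y.Ver C D}
    {u₂ : Y.Ver A₂ B₂} {v₂ : Y.Ver B₂ C₂} {w₂ : Y.Ver C₂ D₂}
    (hu : HEq u u₂) (hv : HEq v v₂) (hw : HEq w w₂) :
    HEq (Y.vassoc u v w) (Y.vassoc u₂ v₂ w₂) := by
  subst hA; subst hB; subst hC; subst hD
  cases eq_of_heq hu; cases eq_of_heq hv; cases eq_of_heq hw; rfl

theorem vassocInv_heq {A B C D A₂ B₂ C₂ D₂ : Y.Obj}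
    (hA : A = A₂) (hB : B = B₂) (hC : C = C₂) (hD : D = D₂)
    {u : Y.Ver A B} {v : Y.Ver B C} {w : Y.Ver C D}
    {u₂ : Y.Ver A₂ B₂} {v₂ : Y.Ver B₂ C₂} {w₂ : Y.Ver C₂ D₂}
    (hu : HEq u u₂) (hv : HEq v v₂) (hw : HEq w w₂) :
    HEq (Y.vassocInv u v w) (Y.vassocInv u₂ v₂ w₂) := by
  subst hA; subst hB; subst hC; subst hD
  cases eq_of_heq hu; cases eq_of_heq hv; cases eq_of_heq hw; rfl

theorem lunit_heq {A B A₂ B₂ : Y.Obj} (hA : A = A₂) (hB : B = B₂)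
    {u : Y.Ver A B} {u₂ : Y.Ver A₂ B₂} (hu : HEq u u₂) :
    HEq (Y.lunit u) (Y.lunit u₂) := by
  subst hA; subst hB; cases eq_of_heq hu; rfl

theorem lunitInv_heq {A B A₂ B₂ : Y.Obj} (hA : A = A₂) (hB : B = B₂)
    {u : Y.Ver A B} {u₂ : Y.Ver A₂ B₂} (hu : HEq u u₂) :
    HEq (Y.lunitInv u) (Y.lunitInv u₂) := by
  subst hA; subst hB; cases eq_of_heq hu; rfl

theorem runit_heq {A B A₂ B₂ : Y.Obj} (hA : A = A₂) (hB : B = B₂)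
    {u : Y.Ver A B} {u₂ : Y.Ver A₂ B₂} (hu : HEq u u₂) :
    HEq (Y.runit u) (Y.runit u₂) := by
  subst hA; subst hB; cases eq_of_heq hu; rfl

theorem runitInv_heq {A B A₂ B₂ : Y.Obj} (hA : A = A₂) (hB : B = B₂)
    {u : Y.Ver A B} {u₂ : Y.Ver A₂ B₂} (hu : HEq u u₂) :
    HEq (Y.runitInv u) (Y.runitInv u₂) := by
  subst hA; subst hB; cases eq_of_heq hu; rfl

theorem cid_chcomp' {A B A' B' : Y.Obj} {e : Y.Hor A A} {e' : Y.Hor A' A'}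
    {u₂ u : Y.Ver A A'} {f : Y.Hor A B} {v : Y.Ver B B'} {g : Y.Hor A' B'}
    (he : e = Y.hid A) (he' : e' = Y.hid A') (hu : u₂ = u)
    (γ : Y.Cell e u₂ u e') (hγ : HEq γ (Y.cid u₂))
    (α : Y.Cell f u v g) : HEq (Y.chcomp γ α) α := by
  subst he; subst he'; subst hu; cases eq_of_heq hγ; exact Y.cid_chcomp α

theorem chcomp_cid' {A B A' B' : Y.Obj} {f : Y.Hor A B} {u : Y.Ver A A'}
    {v v₂ : Y.Ver B B'} {g : Y.Hor A' B'} {e : Y.Hor B B} {e' : Y.Hor B' B'}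
    (he : e = Y.hid B) (he' : e' = Y.hid B') (hv : v = v₂)
    (α : Y.Cell f u v g) (γ : Y.Cell e v v₂ e') (hγ : HEq γ (Y.cid v)) :
    HEq (Y.chcomp α γ) α := by
  subst he; subst he'; subst hv; cases eq_of_heq hγ; exact Y.chcomp_cid α

theorem special_inv_unique {A B : Y.Obj} {u v : Y.Ver A B}
    {a : Y.Cell (Y.hid A) u v (Y.hid B)} {i j : Y.Cell (Y.hid A) v u (Y.hid B)}
    (hai : HEq (Y.chcomp a i) (Y.cid u)) (hja : HEq (Y.chcomp j a) (Y.cid v)) :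
    i = j := by
  have h1 : HEq i (Y.chcomp (Y.cid v) i) := (Y.cid_chcomp i).symm
  have h2 : HEq (Y.chcomp (Y.cid v) i) (Y.chcomp (Y.chcomp j a) i) :=
    chcomp_heq rfl rfl rfl rfl rfl rfl
      (heq_of_eq (Y.hid_comp _).symm) HEq.rfl HEq.rfl HEq.rfl HEq.rfl
      (heq_of_eq (Y.hid_comp _).symm) HEq.rfl hja.symm HEq.rfl
  have h3 : HEq (Y.chcomp (Y.chcomp j a) i) (Y.chcomp j (Y.chcomp a i)) :=
    Y.chcomp_assoc j a i
  have h4 : HEq (Y.chcomp j (Y.chcomp a i)) (Y.chcomp j (Y.cid u)) :=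
    chcomp_heq rfl rfl rfl rfl rfl rfl HEq.rfl (heq_of_eq (Y.hid_comp _))
      HEq.rfl HEq.rfl HEq.rfl HEq.rfl (heq_of_eq (Y.hid_comp _)) HEq.rfl hai
  have h5 : HEq (Y.chcomp j (Y.cid u)) j := Y.chcomp_cid j
  exact eq_of_heq ((((h1.trans h2).trans h3).trans h4).trans h5)

end Helpers

section FunctorHelpers

variable {X Y : WeakDoubleCat.{u}} (F : LaxDblFunctor X Y)

theorem LaxDblFunctor.hmap_heq {A B A₂ B₂ : X.Obj} (hA : A = A₂) (hB : B = B₂)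
    {f : X.Hor A B} {f₂ : X.Hor A₂ B₂} (hf : HEq f f₂) :
    HEq (F.hmap f) (F.hmap f₂) := by
  subst hA; subst hB; cases eq_of_heq hf; rfl

theorem LaxDblFunctor.vmap_heq {A B A₂ B₂ : X.Obj} (hA : A = A₂) (hB : B = B₂)
    {u : X.Ver A B} {u₂ : X.Ver A₂ B₂} (hu : HEq u u₂) :
    HEq (F.vmap u) (F.vmap u₂) := by
  subst hA; subst hB; cases eq_of_heq hu; rfl

theorem LaxDblFunctor.cmap_heq {A B A' B' A₂ B₂ A₂' B₂' : X.Obj}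
    (hA : A = A₂) (hB : B = B₂) (hA' : A' = A₂') (hB' : B' = B₂')
    {f : X.Hor A B} {u : X.Ver A A'} {v : X.Ver B B'} {g : X.Hor A' B'}
    {f₂ : X.Hor A₂ B₂} {u₂ : X.Ver A₂ A₂'} {v₂ : X.Ver B₂ B₂'} {g₂ : X.Hor A₂' B₂'}
    (hf : HEq f f₂) (hu : HEq u u₂) (hv : HEq v v₂) (hg : HEq g g₂)
    {α : X.Cell f u v g} {α₂ : X.Cell f₂ u₂ v₂ g₂} (hα : HEq α α₂) :
    HEq (F.cmap α) (F.cmap α₂) := by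
  subst hA; subst hB; subst hA'; subst hB'
  cases eq_of_heq hf; cases eq_of_heq hu; cases eq_of_heq hv; cases eq_of_heq hg
  cases eq_of_heq hα; rfl

end FunctorHelpers


section StrictLemmas

variable {X Y : WeakDoubleCat.{u}} {F : LaxDblFunctor X Y} (hF : F.IsStrict)

include hF

theorem strict_cmap_idcell {A B : X.Obj} (f : X.Hor A B) :
    HEq (F.cmap (X.idcell f)) (Y.idcell (F.hmap f)) := by
  have h1 := F.laxid_nat f
  have l : HEq (Y.chcomp (F.laxid A) (F.cmap (X.idcell f))) (F.cmap (X.idcell f)) :=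
    cid_chcomp' rfl rfl (hF.1 A).symm (F.laxid A) (hF.2.2.1 A) (F.cmap (X.idcell f))
  have r : HEq (Y.chcomp (Y.idcell (F.hmap f)) (F.laxid B)) (Y.idcell (F.hmap f)) :=
    chcomp_cid' rfl rfl (hF.1 B).symm (Y.idcell (F.hmap f)) (F.laxid B) (hF.2.2.1 B)
  exact (l.symm.trans h1).trans r

theorem strict_cmap_cvcomp {A B A' B' A'' B'' : X.Obj} {f : X.Hor A B}
    {u : X.Ver A A'} {v : X.Ver B B'} {g : X.Hor A' B'}
    {u' : X.Ver A' A''} {v' : X.Ver B' B''} {h : X.Hor A'' B''}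
    (α : X.Cell f u v g) (β : X.Cell g u' v' h) :
    HEq (F.cmap (X.cvcomp α β)) (Y.cvcomp (F.cmap α) (F.cmap β)) := by
  have h1 := F.laxcomp_nat α β
  have l : HEq (Y.chcomp (F.laxcomp u u') (F.cmap (X.cvcomp α β)))
      (F.cmap (X.cvcomp α β)) :=
    cid_chcomp' rfl rfl (hF.2.1 u u').symm (F.laxcomp u u') (hF.2.2.2 u u') _
  have r : HEq (Y.chcomp (Y.cvcomp (F.cmap α) (F.cmap β)) (F.laxcomp v v'))
      (Y.cvcomp (F.cmap α) (F.cmap β)) :=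
    chcomp_cid' rfl rfl (hF.2.1 v v').symm _ (F.laxcomp v v') (hF.2.2.2 v v')
  exact (l.symm.trans h1).trans r

theorem strict_cmap_lunit {A B : X.Obj} (u : X.Ver A B) :
    HEq (F.cmap (X.lunit u)) (Y.lunit (F.vmap u)) := by
  have h1 := F.lax_lunit u
  have i1 : HEq (Y.chcomp (F.laxcomp (X.vid A) u) (F.cmap (X.lunit u)))
      (F.cmap (X.lunit u)) :=
    cid_chcomp' rfl rfl (hF.2.1 (X.vid A) u).symm _ (hF.2.2.2 _ _) _
  have hγ : HEq (Y.cvcomp (F.laxid A) (Y.cid (F.vmap u)))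
      (Y.cid (Y.vcomp (Y.vid (F.obj A)) (F.vmap u))) := by
    have c1 : HEq (Y.cvcomp (F.laxid A) (Y.cid (F.vmap u)))
        (Y.cvcomp (Y.cid (Y.vid (F.obj A))) (Y.cid (F.vmap u))) :=
      cvcomp_heq rfl rfl rfl rfl rfl rfl HEq.rfl HEq.rfl (heq_of_eq (hF.1 A))
        HEq.rfl HEq.rfl HEq.rfl HEq.rfl (hF.2.2.1 A) HEq.rfl
    exact c1.trans (heq_of_eq (Y.cid_vcomp _ _))
  have i2 : HEq (Y.chcomp (Y.cvcomp (F.laxid A) (Y.cid (F.vmap u)))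
      (Y.chcomp (F.laxcomp (X.vid A) u) (F.cmap (X.lunit u))))
      (Y.chcomp (F.laxcomp (X.vid A) u) (F.cmap (X.lunit u))) :=
    cid_chcomp' rfl rfl (by rw [hF.1]) _ hγ _
  exact ((i2.trans i1).symm).trans h1

theorem strict_cmap_runit {A B : X.Obj} (u : X.Ver A B) :
    HEq (F.cmap (X.runit u)) (Y.runit (F.vmap u)) := by
  have h1 := F.lax_runit u
  have i1 : HEq (Y.chcomp (F.laxcomp u (X.vid B)) (F.cmap (X.runit u)))
      (F.cmap (X.runit u)) :=
    cid_chcomp' rfl rfl (hF.2.1 u (X.vid B)).symm _ (hF.2.2.2 _ _) _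
  have hγ : HEq (Y.cvcomp (Y.cid (F.vmap u)) (F.laxid B))
      (Y.cid (Y.vcomp (F.vmap u) (Y.vid (F.obj B)))) := by
    have c1 : HEq (Y.cvcomp (Y.cid (F.vmap u)) (F.laxid B))
        (Y.cvcomp (Y.cid (F.vmap u)) (Y.cid (Y.vid (F.obj B)))) :=
      cvcomp_heq rfl rfl rfl rfl rfl rfl HEq.rfl HEq.rfl HEq.rfl
        HEq.rfl HEq.rfl (heq_of_eq (hF.1 B)) HEq.rfl HEq.rfl (hF.2.2.1 B)
    exact c1.trans (heq_of_eq (Y.cid_vcomp _ _))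
  have i2 : HEq (Y.chcomp (Y.cvcomp (Y.cid (F.vmap u)) (F.laxid B))
      (Y.chcomp (F.laxcomp u (X.vid B)) (F.cmap (X.runit u))))
      (Y.chcomp (F.laxcomp u (X.vid B)) (F.cmap (X.runit u))) :=
    cid_chcomp' rfl rfl (by rw [hF.1]) _ hγ _
  exact ((i2.trans i1).symm).trans h1

theorem strict_cmap_vassoc {A B C D : X.Obj} (u : X.Ver A B) (v : X.Ver B C)
    (w : X.Ver C D) :
    HEq (F.cmap (X.vassoc u v w)) (Y.vassoc (F.vmap u) (F.vmap v) (F.vmap w)) := by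
  have h1 := F.lax_assoc u v w
  -- right hand side of lax_assoc reduces to `F.cmap (X.vassoc u v w)`
  have r1 : HEq (Y.chcomp (F.laxcomp u (X.vcomp v w)) (F.cmap (X.vassoc u v w)))
      (F.cmap (X.vassoc u v w)) :=
    cid_chcomp' rfl rfl (hF.2.1 u (X.vcomp v w)).symm _ (hF.2.2.2 _ _) _
  have hγr : HEq (Y.cvcomp (Y.cid (F.vmap u)) (F.laxcomp v w))
      (Y.cid (Y.vcomp (F.vmap u) (Y.vcomp (F.vmap v) (F.vmap w)))) := by
    have c1 : HEq (Y.cvcomp (Y.cid (F.vmap u)) (F.laxcomp v w))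
        (Y.cvcomp (Y.cid (F.vmap u)) (Y.cid (Y.vcomp (F.vmap v) (F.vmap w)))) :=
      cvcomp_heq rfl rfl rfl rfl rfl rfl HEq.rfl HEq.rfl HEq.rfl
        HEq.rfl HEq.rfl (heq_of_eq (hF.2.1 v w)) HEq.rfl HEq.rfl (hF.2.2.2 v w)
    exact c1.trans (heq_of_eq (Y.cid_vcomp _ _))
  have r2 : HEq (Y.chcomp (Y.cvcomp (Y.cid (F.vmap u)) (F.laxcomp v w))
      (Y.chcomp (F.laxcomp u (X.vcomp v w)) (F.cmap (X.vassoc u v w))))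
      (Y.chcomp (F.laxcomp u (X.vcomp v w)) (F.cmap (X.vassoc u v w))) :=
    cid_chcomp' rfl rfl (by rw [hF.2.1]) _ hγr _
  -- left hand side of lax_assoc reduces to `Y.vassoc`
  have hγ1 : HEq (Y.cvcomp (F.laxcomp u v) (Y.cid (F.vmap w)))
      (Y.cid (Y.vcomp (Y.vcomp (F.vmap u) (F.vmap v)) (F.vmap w))) := by
    have c1 : HEq (Y.cvcomp (F.laxcomp u v) (Y.cid (F.vmap w)))
        (Y.cvcomp (Y.cid (Y.vcomp (F.vmap u) (F.vmap v))) (Y.cid (F.vmap w))) :=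
      cvcomp_heq rfl rfl rfl rfl rfl rfl HEq.rfl HEq.rfl (heq_of_eq (hF.2.1 u v))
        HEq.rfl HEq.rfl HEq.rfl HEq.rfl (hF.2.2.2 u v) HEq.rfl
    exact c1.trans (heq_of_eq (Y.cid_vcomp _ _))
  have l1 : HEq (Y.chcomp (Y.cvcomp (F.laxcomp u v) (Y.cid (F.vmap w)))
      (F.laxcomp (X.vcomp u v) w)) (F.laxcomp (X.vcomp u v) w) :=
    cid_chcomp' rfl rfl (by rw [hF.2.1]) _ hγ1 _
  have hΓ : HEq (Y.chcomp (Y.cvcomp (F.laxcomp u v) (Y.cid (F.vmap w)))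
      (F.laxcomp (X.vcomp u v) w))
      (Y.cid (Y.vcomp (Y.vcomp (F.vmap u) (F.vmap v)) (F.vmap w))) := by
    refine l1.trans ((hF.2.2.2 (X.vcomp u v) w).trans ?_)
    exact cid_heq rfl rfl (heq_of_eq (by rw [hF.2.1]))
  have l2 : HEq (Y.chcomp (Y.vassoc (F.vmap u) (F.vmap v) (F.vmap w))
      (Y.chcomp (Y.cvcomp (F.laxcomp u v) (Y.cid (F.vmap w)))
        (F.laxcomp (X.vcomp u v) w)))
      (Y.vassoc (F.vmap u) (F.vmap v) (F.vmap w)) := by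
    have hv2 : Y.vcomp (Y.vcomp (F.vmap u) (F.vmap v)) (F.vmap w)
        = F.vmap (X.vcomp (X.vcomp u v) w) := by rw [hF.2.1, hF.2.1]
    exact chcomp_cid' (Y.hid_comp _) (Y.hid_comp _) hv2 _ _ hΓ
  exact (((l2.symm.trans h1).trans r2).trans r1).symm

theorem strict_cmap_vassocInv {A B C D : X.Obj} (u : X.Ver A B) (v : X.Ver B C)
    (w : X.Ver C D) :
    HEq (F.cmap (X.vassocInv u v w))
      (Y.vassocInv (F.vmap u) (F.vmap v) (F.vmap w)) := by
  have e : Y.Cell (F.hmap (X.hid A)) (F.vmap (X.vcomp (X.vcomp u v) w))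
      (F.vmap (X.vcomp u (X.vcomp v w))) (F.hmap (X.hid D))
      = Y.Cell (Y.hid (F.obj A))
        (Y.vcomp (Y.vcomp (F.vmap u) (F.vmap v)) (F.vmap w))
        (Y.vcomp (F.vmap u) (Y.vcomp (F.vmap v) (F.vmap w))) (Y.hid (F.obj D)) := by
    rw [F.hmap_id, F.hmap_id, hF.2.1, hF.2.1, hF.2.1, hF.2.1]
  have hi : HEq (cast e (F.cmap (X.vassocInv u v w))) (F.cmap (X.vassocInv u v w)) :=
    cast_heq e _
  have hai : HEq (Y.chcomp (Y.vassoc (F.vmap u) (F.vmap v) (F.vmap w))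
      (cast e (F.cmap (X.vassocInv u v w))))
      (Y.cid (Y.vcomp (F.vmap u) (Y.vcomp (F.vmap v) (F.vmap w)))) := by
    have s1 : HEq (Y.chcomp (Y.vassoc (F.vmap u) (F.vmap v) (F.vmap w))
        (cast e (F.cmap (X.vassocInv u v w))))
        (Y.chcomp (F.cmap (X.vassoc u v w)) (F.cmap (X.vassocInv u v w))) :=
      chcomp_heq rfl rfl rfl rfl rfl rfl
        (heq_of_eq (F.hmap_id A).symm) (heq_of_eq (F.hmap_id A).symm)
        (heq_of_eq (by rw [hF.2.1, hF.2.1])) (heq_of_eq (by rw [hF.2.1, hF.2.1]))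
        (heq_of_eq (by rw [hF.2.1, hF.2.1]))
        (heq_of_eq (F.hmap_id D).symm) (heq_of_eq (F.hmap_id D).symm)
        (strict_cmap_vassoc hF u v w).symm hi
    have s2 : HEq (F.cmap (X.chcomp (X.vassoc u v w) (X.vassocInv u v w)))
        (F.cmap (X.cid (X.vcomp u (X.vcomp v w)))) :=
      F.cmap_heq rfl rfl rfl rfl (heq_of_eq (X.hid_comp _)) HEq.rfl HEq.rfl
        (heq_of_eq (X.hid_comp _)) (X.vassoc_vassocInv u v w)
    refine ((s1.trans (F.cmap_chcomp _ _).symm).trans s2).trans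
      ((F.cmap_cid _).trans (cid_heq rfl rfl (heq_of_eq (by rw [hF.2.1, hF.2.1]))))
  have := special_inv_unique hai (Y.vassocInv_vassoc (F.vmap u) (F.vmap v) (F.vmap w))
  exact hi.symm.trans (heq_of_eq this)

theorem strict_cmap_lunitInv {A B : X.Obj} (u : X.Ver A B) :
    HEq (F.cmap (X.lunitInv u)) (Y.lunitInv (F.vmap u)) := by
  have e : Y.Cell (F.hmap (X.hid A)) (F.vmap u) (F.vmap (X.vcomp (X.vid A) u))
      (F.hmap (X.hid B))
      = Y.Cell (Y.hid (F.obj A)) (F.vmap u)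
        (Y.vcomp (Y.vid (F.obj A)) (F.vmap u)) (Y.hid (F.obj B)) := by
    rw [F.hmap_id, F.hmap_id, hF.2.1, hF.1]
  have hi : HEq (cast e (F.cmap (X.lunitInv u))) (F.cmap (X.lunitInv u)) := cast_heq e _
  have hai : HEq (Y.chcomp (Y.lunit (F.vmap u)) (cast e (F.cmap (X.lunitInv u))))
      (Y.cid (Y.vcomp (Y.vid (F.obj A)) (F.vmap u))) := by
    have s1 : HEq (Y.chcomp (Y.lunit (F.vmap u)) (cast e (F.cmap (X.lunitInv u))))
        (Y.chcomp (F.cmap (X.lunit u)) (F.cmap (X.lunitInv u))) :=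
      chcomp_heq rfl rfl rfl rfl rfl rfl
        (heq_of_eq (F.hmap_id A).symm) (heq_of_eq (F.hmap_id A).symm)
        (heq_of_eq (by rw [hF.2.1, hF.1])) HEq.rfl
        (heq_of_eq (by rw [hF.2.1, hF.1]))
        (heq_of_eq (F.hmap_id B).symm) (heq_of_eq (F.hmap_id B).symm)
        (strict_cmap_lunit hF u).symm hi
    have s2 : HEq (F.cmap (X.chcomp (X.lunit u) (X.lunitInv u)))
        (F.cmap (X.cid (X.vcomp (X.vid A) u))) :=
      F.cmap_heq rfl rfl rfl rfl (heq_of_eq (X.hid_comp _)) HEq.rfl HEq.rfl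
        (heq_of_eq (X.hid_comp _)) (X.lunit_lunitInv u)
    refine ((s1.trans (F.cmap_chcomp _ _).symm).trans s2).trans
      ((F.cmap_cid _).trans (cid_heq rfl rfl (heq_of_eq (by rw [hF.2.1, hF.1]))))
  have := special_inv_unique hai (Y.lunitInv_lunit (F.vmap u))
  exact hi.symm.trans (heq_of_eq this)

theorem strict_cmap_runitInv {A B : X.Obj} (u : X.Ver A B) :
    HEq (F.cmap (X.runitInv u)) (Y.runitInv (F.vmap u)) := by
  have e : Y.Cell (F.hmap (X.hid A)) (F.vmap u) (F.vmap (X.vcomp u (X.vid B)))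
      (F.hmap (X.hid B))
      = Y.Cell (Y.hid (F.obj A)) (F.vmap u)
        (Y.vcomp (F.vmap u) (Y.vid (F.obj B))) (Y.hid (F.obj B)) := by
    rw [F.hmap_id, F.hmap_id, hF.2.1, hF.1]
  have hi : HEq (cast e (F.cmap (X.runitInv u))) (F.cmap (X.runitInv u)) := cast_heq e _
  have hai : HEq (Y.chcomp (Y.runit (F.vmap u)) (cast e (F.cmap (X.runitInv u))))
      (Y.cid (Y.vcomp (F.vmap u) (Y.vid (F.obj B)))) := by
    have s1 : HEq (Y.chcomp (Y.runit (F.vmap u)) (cast e (F.cmap (X.runitInv u))))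
        (Y.chcomp (F.cmap (X.runit u)) (F.cmap (X.runitInv u))) :=
      chcomp_heq rfl rfl rfl rfl rfl rfl
        (heq_of_eq (F.hmap_id A).symm) (heq_of_eq (F.hmap_id A).symm)
        (heq_of_eq (by rw [hF.2.1, hF.1])) HEq.rfl
        (heq_of_eq (by rw [hF.2.1, hF.1]))
        (heq_of_eq (F.hmap_id B).symm) (heq_of_eq (F.hmap_id B).symm)
        (strict_cmap_runit hF u).symm hi
    have s2 : HEq (F.cmap (X.chcomp (X.runit u) (X.runitInv u)))
        (F.cmap (X.cid (X.vcomp u (X.vid B)))) :=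
      F.cmap_heq rfl rfl rfl rfl (heq_of_eq (X.hid_comp _)) HEq.rfl HEq.rfl
        (heq_of_eq (X.hid_comp _)) (X.runit_runitInv u)
    refine ((s1.trans (F.cmap_chcomp _ _).symm).trans s2).trans
      ((F.cmap_cid _).trans (cid_heq rfl rfl (heq_of_eq (by rw [hF.2.1, hF.1]))))
  have := special_inv_unique hai (Y.runitInv_runit (F.vmap u))
  exact hi.symm.trans (heq_of_eq this)

end StrictLemmas


section PullbackCat

variable {A B C : WeakDoubleCat.{u}} {F : LaxDblFunctor A C} {G : LaxDblFunctor B C}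

theorem pbHor_ext {X Y : (pbData F G).Obj} {f g : (pbData F G).Hor X Y}
    (h1 : f.val.1 = g.val.1) (h2 : f.val.2 = g.val.2) : f = g :=
  Subtype.ext (Prod.ext h1 h2)

theorem pbVer_ext {X Y : (pbData F G).Obj} {f g : (pbData F G).Ver X Y}
    (h1 : f.val.1 = g.val.1) (h2 : f.val.2 = g.val.2) : f = g :=
  Subtype.ext (Prod.ext h1 h2)

theorem pbCell_ext {X Y X' Y' : (pbData F G).Obj} {f : (pbData F G).Hor X Y}
    {u : (pbData F G).Ver X X'} {v : (pbData F G).Ver Y Y'} {g : (pbData F G).Hor X' Y'}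
    {α β : (pbData F G).Cell f u v g}
    (h1 : α.val.1 = β.val.1) (h2 : α.val.2 = β.val.2) : α = β :=
  Subtype.ext (Prod.ext h1 h2)

theorem pbHor_heq {X X₂ Y Y₂ : (pbData F G).Obj} (hX : X = X₂) (hY : Y = Y₂)
    {f : (pbData F G).Hor X Y} {g : (pbData F G).Hor X₂ Y₂}
    (h1 : HEq f.val.1 g.val.1) (h2 : HEq f.val.2 g.val.2) : HEq f g := by
  subst hX; subst hY
  exact heq_of_eq (pbHor_ext (eq_of_heq h1) (eq_of_heq h2))

theorem pbVer_heq {X X₂ Y Y₂ : (pbData F G).Obj} (hX : X = X₂) (hY : Y = Y₂)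
    {f : (pbData F G).Ver X Y} {g : (pbData F G).Ver X₂ Y₂}
    (h1 : HEq f.val.1 g.val.1) (h2 : HEq f.val.2 g.val.2) : HEq f g := by
  subst hX; subst hY
  exact heq_of_eq (pbVer_ext (eq_of_heq h1) (eq_of_heq h2))

theorem pbCell_heq {X Y X' Y' X₂ Y₂ X₂' Y₂' : (pbData F G).Obj}
    (hX : X = X₂) (hY : Y = Y₂) (hX' : X' = X₂') (hY' : Y' = Y₂')
    {f : (pbData F G).Hor X Y} {u : (pbData F G).Ver X X'}
    {v : (pbData F G).Ver Y Y'} {g : (pbData F G).Hor X' Y'}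
    {f₂ : (pbData F G).Hor X₂ Y₂} {u₂ : (pbData F G).Ver X₂ X₂'}
    {v₂ : (pbData F G).Ver Y₂ Y₂'} {g₂ : (pbData F G).Hor X₂' Y₂'}
    (hf : HEq f f₂) (hu : HEq u u₂) (hv : HEq v v₂) (hg : HEq g g₂)
    {α : (pbData F G).Cell f u v g} {β : (pbData F G).Cell f₂ u₂ v₂ g₂}
    (h1 : HEq α.val.1 β.val.1) (h2 : HEq α.val.2 β.val.2) : HEq α β := by
  subst hX; subst hY; subst hX'; subst hY'
  cases eq_of_heq hf; cases eq_of_heq hu; cases eq_of_heq hv; cases eq_of_heq hg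
  exact heq_of_eq (pbCell_ext (eq_of_heq h1) (eq_of_heq h2))

def pbHid (X : (pbData F G).Obj) : (pbData F G).Hor X X :=
  ⟨(A.hid X.val.1, B.hid X.val.2),
   ((heq_of_eq (F.hmap_id _)).trans (hid_heq X.prop)).trans
     (heq_of_eq (G.hmap_id _)).symm⟩

def pbHcomp {X Y Z : (pbData F G).Obj} (f : (pbData F G).Hor X Y)
    (g : (pbData F G).Hor Y Z) : (pbData F G).Hor X Z :=
  ⟨(A.hcomp f.val.1 g.val.1, B.hcomp f.val.2 g.val.2),
   ((heq_of_eq (F.hmap_comp _ _)).trans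
     (hcomp_heq X.prop Y.prop Z.prop f.prop g.prop)).trans
     (heq_of_eq (G.hmap_comp _ _)).symm⟩

def pbCid {X X' : (pbData F G).Obj} (u : (pbData F G).Ver X X') :
    (pbData F G).Cell (pbHid X) u u (pbHid X') :=
  ⟨(A.cid u.val.1, B.cid u.val.2),
   ((F.cmap_cid _).trans (cid_heq X.prop X'.prop u.prop)).trans (G.cmap_cid _).symm⟩

def pbChcomp {X Y Z X' Y' Z' : (pbData F G).Obj} {f : (pbData F G).Hor X Y}
    {g : (pbData F G).Hor Y Z} {u : (pbData F G).Ver X X'} {v : (pbData F G).Ver Y Y'}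
    {w : (pbData F G).Ver Z Z'} {f' : (pbData F G).Hor X' Y'}
    {g' : (pbData F G).Hor Y' Z'}
    (α : (pbData F G).Cell f u v f') (β : (pbData F G).Cell g v w g') :
    (pbData F G).Cell (pbHcomp f g) u w (pbHcomp f' g') :=
  ⟨(A.chcomp α.val.1 β.val.1, B.chcomp α.val.2 β.val.2),
   ((F.cmap_chcomp _ _).trans
     (chcomp_heq X.prop Y.prop Z.prop X'.prop Y'.prop Z'.prop f.prop g.prop
       u.prop v.prop w.prop f'.prop g'.prop α.prop β.prop)).trans
     (G.cmap_chcomp _ _).symm⟩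

variable (hF : F.IsStrict) (hG : G.IsStrict)

def pbVid (X : (pbData F G).Obj) : (pbData F G).Ver X X :=
  ⟨(A.vid X.val.1, B.vid X.val.2),
   ((heq_of_eq (hF.1 _)).trans (vid_heq X.prop)).trans (heq_of_eq (hG.1 _)).symm⟩

def pbVcomp {X Y Z : (pbData F G).Obj} (u : (pbData F G).Ver X Y)
    (v : (pbData F G).Ver Y Z) : (pbData F G).Ver X Z :=
  ⟨(A.vcomp u.val.1 v.val.1, B.vcomp u.val.2 v.val.2),
   ((heq_of_eq (hF.2.1 _ _)).trans
     (vcomp_heq X.prop Y.prop Z.prop u.prop v.prop)).trans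
     (heq_of_eq (hG.2.1 _ _)).symm⟩

def pbIdcell {X Y : (pbData F G).Obj} (f : (pbData F G).Hor X Y) :
    (pbData F G).Cell f (pbVid hF hG X) (pbVid hF hG Y) f :=
  ⟨(A.idcell f.val.1, B.idcell f.val.2),
   ((strict_cmap_idcell hF _).trans (idcell_heq X.prop Y.prop f.prop)).trans
     (strict_cmap_idcell hG _).symm⟩

def pbCvcomp {X Y X' Y' X'' Y'' : (pbData F G).Obj} {f : (pbData F G).Hor X Y}
    {u : (pbData F G).Ver X X'} {v : (pbData F G).Ver Y Y'}
    {g : (pbData F G).Hor X' Y'} {u' : (pbData F G).Ver X' X''}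
    {v' : (pbData F G).Ver Y' Y''} {h : (pbData F G).Hor X'' Y''}
    (α : (pbData F G).Cell f u v g) (β : (pbData F G).Cell g u' v' h) :
    (pbData F G).Cell f (pbVcomp hF hG u u') (pbVcomp hF hG v v') h :=
  ⟨(A.cvcomp α.val.1 β.val.1, B.cvcomp α.val.2 β.val.2),
   ((strict_cmap_cvcomp hF _ _).trans
     (cvcomp_heq X.prop Y.prop X'.prop Y'.prop X''.prop Y''.prop f.prop u.prop
       v.prop g.prop u'.prop v'.prop h.prop α.prop β.prop)).trans
     (strict_cmap_cvcomp hG _ _).symm⟩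

def pbVassoc {X Y Z W : (pbData F G).Obj} (u : (pbData F G).Ver X Y)
    (v : (pbData F G).Ver Y Z) (w : (pbData F G).Ver Z W) :
    (pbData F G).Cell (pbHid X) (pbVcomp hF hG u (pbVcomp hF hG v w))
      (pbVcomp hF hG (pbVcomp hF hG u v) w) (pbHid W) :=
  ⟨(A.vassoc u.val.1 v.val.1 w.val.1, B.vassoc u.val.2 v.val.2 w.val.2),
   ((strict_cmap_vassoc hF _ _ _).trans
     (vassoc_heq X.prop Y.prop Z.prop W.prop u.prop v.prop w.prop)).trans
     (strict_cmap_vassoc hG _ _ _).symm⟩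

def pbVassocInv {X Y Z W : (pbData F G).Obj} (u : (pbData F G).Ver X Y)
    (v : (pbData F G).Ver Y Z) (w : (pbData F G).Ver Z W) :
    (pbData F G).Cell (pbHid X) (pbVcomp hF hG (pbVcomp hF hG u v) w)
      (pbVcomp hF hG u (pbVcomp hF hG v w)) (pbHid W) :=
  ⟨(A.vassocInv u.val.1 v.val.1 w.val.1, B.vassocInv u.val.2 v.val.2 w.val.2),
   ((strict_cmap_vassocInv hF _ _ _).trans
     (vassocInv_heq X.prop Y.prop Z.prop W.prop u.prop v.prop w.prop)).trans
     (strict_cmap_vassocInv hG _ _ _).symm⟩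

def pbLunit {X Y : (pbData F G).Obj} (u : (pbData F G).Ver X Y) :
    (pbData F G).Cell (pbHid X) (pbVcomp hF hG (pbVid hF hG X) u) u (pbHid Y) :=
  ⟨(A.lunit u.val.1, B.lunit u.val.2),
   ((strict_cmap_lunit hF _).trans (lunit_heq X.prop Y.prop u.prop)).trans
     (strict_cmap_lunit hG _).symm⟩

def pbLunitInv {X Y : (pbData F G).Obj} (u : (pbData F G).Ver X Y) :
    (pbData F G).Cell (pbHid X) u (pbVcomp hF hG (pbVid hF hG X) u) (pbHid Y) :=
  ⟨(A.lunitInv u.val.1, B.lunitInv u.val.2),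
   ((strict_cmap_lunitInv hF _).trans (lunitInv_heq X.prop Y.prop u.prop)).trans
     (strict_cmap_lunitInv hG _).symm⟩

def pbRunit {X Y : (pbData F G).Obj} (u : (pbData F G).Ver X Y) :
    (pbData F G).Cell (pbHid X) (pbVcomp hF hG u (pbVid hF hG Y)) u (pbHid Y) :=
  ⟨(A.runit u.val.1, B.runit u.val.2),
   ((strict_cmap_runit hF _).trans (runit_heq X.prop Y.prop u.prop)).trans
     (strict_cmap_runit hG _).symm⟩

def pbRunitInv {X Y : (pbData F G).Obj} (u : (pbData F G).Ver X Y) :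
    (pbData F G).Cell (pbHid X) u (pbVcomp hF hG u (pbVid hF hG Y)) (pbHid Y) :=
  ⟨(A.runitInv u.val.1, B.runitInv u.val.2),
   ((strict_cmap_runitInv hF _).trans (runitInv_heq X.prop Y.prop u.prop)).trans
     (strict_cmap_runitInv hG _).symm⟩

def pbCat : WeakDoubleCat.{u} where
  toDblData := pbData F G
  hid := pbHid
  hcomp := pbHcomp
  hid_comp f := pbHor_ext (A.hid_comp _) (B.hid_comp _)
  hcomp_id f := pbHor_ext (A.hcomp_id _) (B.hcomp_id _)
  hassoc f g h := pbHor_ext (A.hassoc _ _ _) (B.hassoc _ _ _)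
  cid := pbCid
  chcomp := pbChcomp
  cid_chcomp α :=
    pbCell_heq rfl rfl rfl rfl
      (heq_of_eq (pbHor_ext (A.hid_comp _) (B.hid_comp _))) HEq.rfl HEq.rfl
      (heq_of_eq (pbHor_ext (A.hid_comp _) (B.hid_comp _)))
      (A.cid_chcomp _) (B.cid_chcomp _)
  chcomp_cid α :=
    pbCell_heq rfl rfl rfl rfl
      (heq_of_eq (pbHor_ext (A.hcomp_id _) (B.hcomp_id _))) HEq.rfl HEq.rfl
      (heq_of_eq (pbHor_ext (A.hcomp_id _) (B.hcomp_id _)))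
      (A.chcomp_cid _) (B.chcomp_cid _)
  chcomp_assoc α β γ :=
    pbCell_heq rfl rfl rfl rfl
      (heq_of_eq (pbHor_ext (A.hassoc _ _ _) (B.hassoc _ _ _))) HEq.rfl HEq.rfl
      (heq_of_eq (pbHor_ext (A.hassoc _ _ _) (B.hassoc _ _ _)))
      (A.chcomp_assoc _ _ _) (B.chcomp_assoc _ _ _)
  vid := pbVid hF hG
  vcomp := pbVcomp hF hG
  idcell := pbIdcell hF hG
  cvcomp := pbCvcomp hF hG
  idcell_hid X := pbCell_ext (A.idcell_hid _) (B.idcell_hid _)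
  idcell_hcomp f g := pbCell_ext (A.idcell_hcomp _ _) (B.idcell_hcomp _ _)
  cid_vcomp u v := pbCell_ext (A.cid_vcomp _ _) (B.cid_vcomp _ _)
  interchange α β γ δ :=
    pbCell_ext (A.interchange _ _ _ _) (B.interchange _ _ _ _)
  vassoc := pbVassoc hF hG
  vassocInv := pbVassocInv hF hG
  vassoc_vassocInv u v w :=
    pbCell_heq rfl rfl rfl rfl
      (heq_of_eq (pbHor_ext (A.hid_comp _) (B.hid_comp _))) HEq.rfl HEq.rfl
      (heq_of_eq (pbHor_ext (A.hid_comp _) (B.hid_comp _)))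
      (A.vassoc_vassocInv _ _ _) (B.vassoc_vassocInv _ _ _)
  vassocInv_vassoc u v w :=
    pbCell_heq rfl rfl rfl rfl
      (heq_of_eq (pbHor_ext (A.hid_comp _) (B.hid_comp _))) HEq.rfl HEq.rfl
      (heq_of_eq (pbHor_ext (A.hid_comp _) (B.hid_comp _)))
      (A.vassocInv_vassoc _ _ _) (B.vassocInv_vassoc _ _ _)
  lunit := pbLunit hF hG
  lunitInv := pbLunitInv hF hG
  lunit_lunitInv u :=
    pbCell_heq rfl rfl rfl rfl
      (heq_of_eq (pbHor_ext (A.hid_comp _) (B.hid_comp _))) HEq.rfl HEq.rfl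
      (heq_of_eq (pbHor_ext (A.hid_comp _) (B.hid_comp _)))
      (A.lunit_lunitInv _) (B.lunit_lunitInv _)
  lunitInv_lunit u :=
    pbCell_heq rfl rfl rfl rfl
      (heq_of_eq (pbHor_ext (A.hid_comp _) (B.hid_comp _))) HEq.rfl HEq.rfl
      (heq_of_eq (pbHor_ext (A.hid_comp _) (B.hid_comp _)))
      (A.lunitInv_lunit _) (B.lunitInv_lunit _)
  runit := pbRunit hF hG
  runitInv := pbRunitInv hF hG
  runit_runitInv u :=
    pbCell_heq rfl rfl rfl rfl
      (heq_of_eq (pbHor_ext (A.hid_comp _) (B.hid_comp _))) HEq.rfl HEq.rfl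
      (heq_of_eq (pbHor_ext (A.hid_comp _) (B.hid_comp _)))
      (A.runit_runitInv _) (B.runit_runitInv _)
  runitInv_runit u :=
    pbCell_heq rfl rfl rfl rfl
      (heq_of_eq (pbHor_ext (A.hid_comp _) (B.hid_comp _))) HEq.rfl HEq.rfl
      (heq_of_eq (pbHor_ext (A.hid_comp _) (B.hid_comp _)))
      (A.runitInv_runit _) (B.runitInv_runit _)
  vassoc_nat α β γ :=
    pbCell_heq rfl rfl rfl rfl
      (heq_of_eq (pbHor_ext (by exact (A.hid_comp _).trans (A.hcomp_id _).symm)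
        (by exact (B.hid_comp _).trans (B.hcomp_id _).symm))) HEq.rfl HEq.rfl
      (heq_of_eq (pbHor_ext (by exact (A.hid_comp _).trans (A.hcomp_id _).symm)
        (by exact (B.hid_comp _).trans (B.hcomp_id _).symm)))
      (A.vassoc_nat _ _ _) (B.vassoc_nat _ _ _)
  lunit_nat α :=
    pbCell_heq rfl rfl rfl rfl
      (heq_of_eq (pbHor_ext (by exact (A.hid_comp _).trans (A.hcomp_id _).symm)
        (by exact (B.hid_comp _).trans (B.hcomp_id _).symm))) HEq.rfl HEq.rfl
      (heq_of_eq (pbHor_ext (by exact (A.hid_comp _).trans (A.hcomp_id _).symm)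
        (by exact (B.hid_comp _).trans (B.hcomp_id _).symm)))
      (A.lunit_nat _) (B.lunit_nat _)
  runit_nat α :=
    pbCell_heq rfl rfl rfl rfl
      (heq_of_eq (pbHor_ext (by exact (A.hid_comp _).trans (A.hcomp_id _).symm)
        (by exact (B.hid_comp _).trans (B.hcomp_id _).symm))) HEq.rfl HEq.rfl
      (heq_of_eq (pbHor_ext (by exact (A.hid_comp _).trans (A.hcomp_id _).symm)
        (by exact (B.hid_comp _).trans (B.hcomp_id _).symm)))
      (A.runit_nat _) (B.runit_nat _)
  pentagon u v w x :=
    pbCell_heq rfl rfl rfl rfl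
      (heq_of_eq (pbHor_ext (by exact (A.hid_comp _).symm)
        (by exact (B.hid_comp _).symm))) HEq.rfl HEq.rfl
      (heq_of_eq (pbHor_ext (by exact (A.hid_comp _).symm)
        (by exact (B.hid_comp _).symm)))
      (A.pentagon _ _ _ _) (B.pentagon _ _ _ _)
  triangle u v :=
    pbCell_heq rfl rfl rfl rfl
      (heq_of_eq (pbHor_ext (A.hid_comp _) (B.hid_comp _))) HEq.rfl HEq.rfl
      (heq_of_eq (pbHor_ext (A.hid_comp _) (B.hid_comp _)))
      (A.triangle _ _) (B.triangle _ _)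

end PullbackCat


section Projections

variable {A B C : WeakDoubleCat.{u}} {F : LaxDblFunctor A C} {G : LaxDblFunctor B C}
variable (hF : F.IsStrict) (hG : G.IsStrict)

def pbP : LaxDblFunctor (pbCat hF hG) A where
  obj X := X.val.1
  hmap f := f.val.1
  vmap u := u.val.1
  cmap α := α.val.1
  hmap_id _ := rfl
  hmap_comp _ _ := rfl
  cmap_cid _ := HEq.rfl
  cmap_chcomp _ _ := HEq.rfl
  laxid X := A.cid (A.vid X.val.1)
  laxcomp u v := A.cid (A.vcomp u.val.1 v.val.1)
  laxid_nat f := (A.cid_chcomp _).trans (A.chcomp_cid _).symm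
  laxcomp_nat α β := (A.cid_chcomp _).trans (A.chcomp_cid _).symm
  lax_lunit u :=
    (cid_chcomp' rfl rfl rfl _ (heq_of_eq (A.cid_vcomp _ _)) _).trans (A.cid_chcomp _)
  lax_runit u :=
    (cid_chcomp' rfl rfl rfl _ (heq_of_eq (A.cid_vcomp _ _)) _).trans (A.cid_chcomp _)
  lax_assoc u v w := by
    have hΓ : HEq (A.chcomp (A.cvcomp (A.cid (A.vcomp u.val.1 v.val.1)) (A.cid w.val.1))
        (A.cid (A.vcomp (A.vcomp u.val.1 v.val.1) w.val.1)))
        (A.cid (A.vcomp (A.vcomp u.val.1 v.val.1) w.val.1)) :=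
      cid_chcomp' rfl rfl rfl _ (heq_of_eq (A.cid_vcomp _ _)) _
    have l : HEq (A.chcomp (A.vassoc u.val.1 v.val.1 w.val.1)
        (A.chcomp (A.cvcomp (A.cid (A.vcomp u.val.1 v.val.1)) (A.cid w.val.1))
          (A.cid (A.vcomp (A.vcomp u.val.1 v.val.1) w.val.1))))
        (A.vassoc u.val.1 v.val.1 w.val.1) :=
      chcomp_cid' (A.hid_comp _) (A.hid_comp _) rfl _ _ hΓ
    have r : HEq (A.chcomp (A.cvcomp (A.cid u.val.1) (A.cid (A.vcomp v.val.1 w.val.1)))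
        (A.chcomp (A.cid (A.vcomp u.val.1 (A.vcomp v.val.1 w.val.1)))
          (A.vassoc u.val.1 v.val.1 w.val.1)))
        (A.vassoc u.val.1 v.val.1 w.val.1) :=
      (cid_chcomp' rfl rfl rfl _ (heq_of_eq (A.cid_vcomp _ _)) _).trans (A.cid_chcomp _)
    exact l.trans r.symm

def pbQ : LaxDblFunctor (pbCat hF hG) B where
  obj X := X.val.2
  hmap f := f.val.2
  vmap u := u.val.2
  cmap α := α.val.2
  hmap_id _ := rfl
  hmap_comp _ _ := rfl
  cmap_cid _ := HEq.rfl
  cmap_chcomp _ _ := HEq.rfl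
  laxid X := B.cid (B.vid X.val.2)
  laxcomp u v := B.cid (B.vcomp u.val.2 v.val.2)
  laxid_nat f := (B.cid_chcomp _).trans (B.chcomp_cid _).symm
  laxcomp_nat α β := (B.cid_chcomp _).trans (B.chcomp_cid _).symm
  lax_lunit u :=
    (cid_chcomp' rfl rfl rfl _ (heq_of_eq (B.cid_vcomp _ _)) _).trans (B.cid_chcomp _)
  lax_runit u :=
    (cid_chcomp' rfl rfl rfl _ (heq_of_eq (B.cid_vcomp _ _)) _).trans (B.cid_chcomp _)
  lax_assoc u v w := by
    have hΓ : HEq (B.chcomp (B.cvcomp (B.cid (B.vcomp u.val.2 v.val.2)) (B.cid w.val.2))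
        (B.cid (B.vcomp (B.vcomp u.val.2 v.val.2) w.val.2)))
        (B.cid (B.vcomp (B.vcomp u.val.2 v.val.2) w.val.2)) :=
      cid_chcomp' rfl rfl rfl _ (heq_of_eq (B.cid_vcomp _ _)) _
    have l : HEq (B.chcomp (B.vassoc u.val.2 v.val.2 w.val.2)
        (B.chcomp (B.cvcomp (B.cid (B.vcomp u.val.2 v.val.2)) (B.cid w.val.2))
          (B.cid (B.vcomp (B.vcomp u.val.2 v.val.2) w.val.2))))
        (B.vassoc u.val.2 v.val.2 w.val.2) :=
      chcomp_cid' (B.hid_comp _) (B.hid_comp _) rfl _ _ hΓ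
    have r : HEq (B.chcomp (B.cvcomp (B.cid u.val.2) (B.cid (B.vcomp v.val.2 w.val.2)))
        (B.chcomp (B.cid (B.vcomp u.val.2 (B.vcomp v.val.2 w.val.2)))
          (B.vassoc u.val.2 v.val.2 w.val.2)))
        (B.vassoc u.val.2 v.val.2 w.val.2) :=
      (cid_chcomp' rfl rfl rfl _ (heq_of_eq (B.cid_vcomp _ _)) _).trans (B.cid_chcomp _)
    exact l.trans r.symm

def diagLaxid (X : (pbData F G).Obj) :
    C.Cell (C.hid (F.obj X.val.1)) (C.vid (F.obj X.val.1)) (F.vmap (A.vid X.val.1))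
      (C.hid (F.obj X.val.1)) :=
  cast (by rw [hF.1]) (C.cid (C.vid (F.obj X.val.1)))

theorem diagLaxid_heq (X : (pbData F G).Obj) :
    HEq (diagLaxid hF X) (C.cid (C.vid (F.obj X.val.1))) := cast_heq _ _

def diagLaxcomp {X Y Z : (pbData F G).Obj} (u : (pbData F G).Ver X Y)
    (v : (pbData F G).Ver Y Z) :
    C.Cell (C.hid (F.obj X.val.1)) (C.vcomp (F.vmap u.val.1) (F.vmap v.val.1))
      (F.vmap (A.vcomp u.val.1 v.val.1)) (C.hid (F.obj Z.val.1)) :=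
  cast (by rw [hF.2.1]) (C.cid (C.vcomp (F.vmap u.val.1) (F.vmap v.val.1)))

theorem diagLaxcomp_heq {X Y Z : (pbData F G).Obj} (u : (pbData F G).Ver X Y)
    (v : (pbData F G).Ver Y Z) :
    HEq (diagLaxcomp hF u v) (C.cid (C.vcomp (F.vmap u.val.1) (F.vmap v.val.1))) :=
  cast_heq _ _

def pbDiag : LaxDblFunctor (pbCat hF hG) C where
  obj X := F.obj X.val.1
  hmap f := F.hmap f.val.1
  vmap u := F.vmap u.val.1
  cmap α := F.cmap α.val.1
  hmap_id _ := F.hmap_id _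
  hmap_comp _ _ := F.hmap_comp _ _
  cmap_cid _ := F.cmap_cid _
  cmap_chcomp _ _ := F.cmap_chcomp _ _
  laxid X := diagLaxid hF X
  laxcomp u v := diagLaxcomp hF u v
  laxid_nat := fun {X Y} f => by
    have l : HEq (C.chcomp (diagLaxid hF X) (F.cmap (A.idcell f.val.1)))
        (F.cmap (A.idcell f.val.1)) :=
      cid_chcomp' rfl rfl (hF.1 _).symm _ (diagLaxid_heq hF X) _
    have r : HEq (C.chcomp (C.idcell (F.hmap f.val.1)) (diagLaxid hF Y))
        (C.idcell (F.hmap f.val.1)) :=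
      chcomp_cid' rfl rfl (hF.1 _).symm _ _ (diagLaxid_heq hF Y)
    exact (l.trans (strict_cmap_idcell hF _)).trans r.symm
  laxcomp_nat := fun {X Y X' Y' X'' Y''} {f u v g u' v' h} α β => by
    have l : HEq (C.chcomp (diagLaxcomp hF u u') (F.cmap (A.cvcomp α.val.1 β.val.1)))
        (F.cmap (A.cvcomp α.val.1 β.val.1)) :=
      cid_chcomp' rfl rfl (hF.2.1 _ _).symm _ (diagLaxcomp_heq hF u u') _
    have r : HEq (C.chcomp (C.cvcomp (F.cmap α.val.1) (F.cmap β.val.1))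
        (diagLaxcomp hF v v')) (C.cvcomp (F.cmap α.val.1) (F.cmap β.val.1)) :=
      chcomp_cid' rfl rfl (hF.2.1 _ _).symm _ _ (diagLaxcomp_heq hF v v')
    exact (l.trans (strict_cmap_cvcomp hF _ _)).trans r.symm
  lax_lunit := fun {X Y} u => by
    have i1 : HEq (C.chcomp (diagLaxcomp hF (pbVid hF hG X) u)
        (F.cmap (A.lunit u.val.1))) (F.cmap (A.lunit u.val.1)) :=
      cid_chcomp' rfl rfl (hF.2.1 _ _).symm _ (diagLaxcomp_heq hF _ _) _
    have hγ : HEq (C.cvcomp (diagLaxid hF X) (C.cid (F.vmap u.val.1)))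
        (C.cid (C.vcomp (C.vid (F.obj X.val.1)) (F.vmap u.val.1))) := by
      refine HEq.trans ?_ (heq_of_eq (C.cid_vcomp _ _))
      exact cvcomp_heq rfl rfl rfl rfl rfl rfl HEq.rfl HEq.rfl (heq_of_eq (hF.1 _))
        HEq.rfl HEq.rfl HEq.rfl HEq.rfl (diagLaxid_heq hF X) HEq.rfl
    have e : C.vcomp (C.vid (F.obj X.val.1)) (F.vmap u.val.1)
        = C.vcomp (F.vmap (A.vid X.val.1)) (F.vmap u.val.1) := by rw [hF.1]
    exact ((cid_chcomp' rfl rfl e _ hγ _).trans i1).trans (strict_cmap_lunit hF _)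
  lax_runit := fun {X Y} u => by
    have i1 : HEq (C.chcomp (diagLaxcomp hF u (pbVid hF hG Y))
        (F.cmap (A.runit u.val.1))) (F.cmap (A.runit u.val.1)) :=
      cid_chcomp' rfl rfl (hF.2.1 _ _).symm _ (diagLaxcomp_heq hF _ _) _
    have hγ : HEq (C.cvcomp (C.cid (F.vmap u.val.1)) (diagLaxid hF Y))
        (C.cid (C.vcomp (F.vmap u.val.1) (C.vid (F.obj Y.val.1)))) := by
      refine HEq.trans ?_ (heq_of_eq (C.cid_vcomp _ _))
      exact cvcomp_heq rfl rfl rfl rfl rfl rfl HEq.rfl HEq.rfl HEq.rfl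
        HEq.rfl HEq.rfl (heq_of_eq (hF.1 _)) HEq.rfl HEq.rfl (diagLaxid_heq hF Y)
    have e : C.vcomp (F.vmap u.val.1) (C.vid (F.obj Y.val.1))
        = C.vcomp (F.vmap u.val.1) (F.vmap (A.vid Y.val.1)) := by rw [hF.1]
    exact ((cid_chcomp' rfl rfl e _ hγ _).trans i1).trans (strict_cmap_runit hF _)
  lax_assoc := fun {X Y Z W} u v w => by
    have r1 : HEq (C.chcomp (diagLaxcomp hF u (pbVcomp hF hG v w))
        (F.cmap (A.vassoc u.val.1 v.val.1 w.val.1)))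
        (F.cmap (A.vassoc u.val.1 v.val.1 w.val.1)) :=
      cid_chcomp' rfl rfl (hF.2.1 _ _).symm _ (diagLaxcomp_heq hF _ _) _
    have hγr : HEq (C.cvcomp (C.cid (F.vmap u.val.1)) (diagLaxcomp hF v w))
        (C.cid (C.vcomp (F.vmap u.val.1) (C.vcomp (F.vmap v.val.1) (F.vmap w.val.1)))) := by
      refine HEq.trans ?_ (heq_of_eq (C.cid_vcomp _ _))
      exact cvcomp_heq rfl rfl rfl rfl rfl rfl HEq.rfl HEq.rfl HEq.rfl HEq.rfl
        HEq.rfl (heq_of_eq (hF.2.1 _ _)) HEq.rfl HEq.rfl (diagLaxcomp_heq hF v w)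
    have e2 : C.vcomp (F.vmap u.val.1) (C.vcomp (F.vmap v.val.1) (F.vmap w.val.1))
        = C.vcomp (F.vmap u.val.1) (F.vmap (A.vcomp v.val.1 w.val.1)) := by rw [hF.2.1]
    have r2 : HEq (C.chcomp (C.cvcomp (C.cid (F.vmap u.val.1)) (diagLaxcomp hF v w))
        (C.chcomp (diagLaxcomp hF u (pbVcomp hF hG v w))
          (F.cmap (A.vassoc u.val.1 v.val.1 w.val.1))))
        (C.chcomp (diagLaxcomp hF u (pbVcomp hF hG v w))
          (F.cmap (A.vassoc u.val.1 v.val.1 w.val.1))) :=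
      cid_chcomp' rfl rfl e2 _ hγr _
    have hγ1 : HEq (C.cvcomp (diagLaxcomp hF u v) (C.cid (F.vmap w.val.1)))
        (C.cid (C.vcomp (C.vcomp (F.vmap u.val.1) (F.vmap v.val.1)) (F.vmap w.val.1))) := by
      refine HEq.trans ?_ (heq_of_eq (C.cid_vcomp _ _))
      exact cvcomp_heq rfl rfl rfl rfl rfl rfl HEq.rfl HEq.rfl
        (heq_of_eq (hF.2.1 _ _)) HEq.rfl HEq.rfl HEq.rfl HEq.rfl
        (diagLaxcomp_heq hF u v) HEq.rfl
    have e3 : C.vcomp (C.vcomp (F.vmap u.val.1) (F.vmap v.val.1)) (F.vmap w.val.1)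
        = C.vcomp (F.vmap (A.vcomp u.val.1 v.val.1)) (F.vmap w.val.1) := by rw [hF.2.1]
    have l1 : HEq (C.chcomp (C.cvcomp (diagLaxcomp hF u v) (C.cid (F.vmap w.val.1)))
        (diagLaxcomp hF (pbVcomp hF hG u v) w)) (diagLaxcomp hF (pbVcomp hF hG u v) w) :=
      cid_chcomp' rfl rfl e3 _ hγ1 _
    have e4 : C.vcomp (F.vmap (A.vcomp u.val.1 v.val.1)) (F.vmap w.val.1)
        = C.vcomp (C.vcomp (F.vmap u.val.1) (F.vmap v.val.1)) (F.vmap w.val.1) := by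
      rw [hF.2.1]
    have hΓ : HEq (C.chcomp (C.cvcomp (diagLaxcomp hF u v) (C.cid (F.vmap w.val.1)))
        (diagLaxcomp hF (pbVcomp hF hG u v) w))
        (C.cid (C.vcomp (C.vcomp (F.vmap u.val.1) (F.vmap v.val.1)) (F.vmap w.val.1))) :=
      l1.trans ((diagLaxcomp_heq hF _ _).trans (cid_heq rfl rfl (heq_of_eq e4)))
    have e5 : C.vcomp (C.vcomp (F.vmap u.val.1) (F.vmap v.val.1)) (F.vmap w.val.1)
        = F.vmap (A.vcomp (A.vcomp u.val.1 v.val.1) w.val.1) := by rw [hF.2.1, hF.2.1]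
    have l2 : HEq (C.chcomp (C.vassoc (F.vmap u.val.1) (F.vmap v.val.1) (F.vmap w.val.1))
        (C.chcomp (C.cvcomp (diagLaxcomp hF u v) (C.cid (F.vmap w.val.1)))
          (diagLaxcomp hF (pbVcomp hF hG u v) w)))
        (C.vassoc (F.vmap u.val.1) (F.vmap v.val.1) (F.vmap w.val.1)) :=
      chcomp_cid' (C.hid_comp _) (C.hid_comp _) e5 _ _ hΓ
    exact l2.trans ((strict_cmap_vassoc hF _ _ _).symm.trans (r2.trans r1).symm)

end Projections


section MoreHelpers

variable {Y : WeakDoubleCat.{u}}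

theorem hor_type_congr {A A₂ B B₂ : Y.Obj} (hA : A = A₂) (hB : B = B₂) :
    Y.Hor A B = Y.Hor A₂ B₂ := by rw [hA, hB]

theorem cell_type_congr {A B A' B' A₂ B₂ A₂' B₂' : Y.Obj}
    (hA : A = A₂) (hB : B = B₂) (hA' : A' = A₂') (hB' : B' = B₂')
    {f : Y.Hor A B} {u : Y.Ver A A'} {v : Y.Ver B B'} {g : Y.Hor A' B'}
    {f₂ : Y.Hor A₂ B₂} {u₂ : Y.Ver A₂ A₂'} {v₂ : Y.Ver B₂ B₂'} {g₂ : Y.Hor A₂' B₂'}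
    (hf : HEq f f₂) (hu : HEq u u₂) (hv : HEq v v₂) (hg : HEq g g₂) :
    Y.Cell f u v g = Y.Cell f₂ u₂ v₂ g₂ := by
  subst hA; subst hB; subst hA'; subst hB'
  rw [eq_of_heq hf, eq_of_heq hu, eq_of_heq hv, eq_of_heq hg]

end MoreHelpers

theorem LaxDblFunctor.ext' {X P : WeakDoubleCat.{u}} {L M : LaxDblFunctor X P}
    (h0 : ∀ a, L.obj a = M.obj a)
    (h1 : ∀ {a b} (f : X.Hor a b), HEq (L.hmap f) (M.hmap f))
    (h2 : ∀ {a b} (u : X.Ver a b), HEq (L.vmap u) (M.vmap u))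
    (h3 : ∀ {a b a' b'} {f : X.Hor a b} {u : X.Ver a a'} {v : X.Ver b b'}
      {g : X.Hor a' b'} (α : X.Cell f u v g), HEq (L.cmap α) (M.cmap α))
    (h4 : ∀ a, HEq (L.laxid a) (M.laxid a))
    (h5 : ∀ {a b c} (u : X.Ver a b) (v : X.Ver b c),
      HEq (L.laxcomp u v) (M.laxcomp u v)) :
    L = M := by
  obtain ⟨obj, hmap, vmap, cmap, p1, p2, p3, p4, laxid, laxcomp, q1, q2, q3, q4, q5⟩ := L
  obtain ⟨obj', hmap', vmap', cmap', p1', p2', p3', p4', laxid', laxcomp',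
    q1', q2', q3', q4', q5'⟩ := M
  have e0 : obj = obj' := funext h0
  subst e0
  have e1 : @hmap = @hmap' := by
    funext a b f; exact eq_of_heq (h1 f)
  subst e1
  have e2 : @vmap = @vmap' := by
    funext a b u; exact eq_of_heq (h2 u)
  subst e2
  have e3 : @cmap = @cmap' := by
    funext a b a' b' f u v g α; exact eq_of_heq (h3 α)
  subst e3
  have e4 : laxid = laxid' := by
    funext a; exact eq_of_heq (h4 a)
  subst e4
  have e5 : @laxcomp = @laxcomp' := by
    funext a b c u v; exact eq_of_heq (h5 u v)
  subst e5
  rfl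

theorem HorizTransf.ext' {X P : WeakDoubleCat.{u}} {L M : LaxDblFunctor X P}
    {γ δ : HorizTransf L M}
    (h1 : ∀ a, γ.app a = δ.app a)
    (h2 : ∀ {a b} (u : X.Ver a b), HEq (γ.cellapp u) (δ.cellapp u)) : γ = δ := by
  obtain ⟨app, cellapp, r1, r2, r3, r4⟩ := γ
  obtain ⟨app', cellapp', r1', r2', r3', r4'⟩ := δ
  have e0 : app = app' := funext h1
  subst e0
  have e1 : @cellapp = @cellapp' := by
    funext a b u; exact eq_of_heq (h2 u)
  subst e1
  rfl

section Lift

variable {A B C : WeakDoubleCat.{u}} {F : LaxDblFunctor A C} {G : LaxDblFunctor B C}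
variable (hF : F.IsStrict) (hG : G.IsStrict)
variable {X : WeakDoubleCat.{u}} (H : LaxDblFunctor X A) (K : LaxDblFunctor X B)
variable (d : LaxDblFunctor X C) (hd1 : LaxCompSpec H F d) (hd2 : LaxCompSpec K G d)

def pbLift : LaxDblFunctor X (pbCat hF hG) where
  obj x := ⟨(H.obj x, K.obj x), (hd1.1 x).symm.trans (hd2.1 x)⟩
  hmap f := ⟨(H.hmap f, K.hmap f), (hd1.2.1 f).symm.trans (hd2.2.1 f)⟩
  vmap u := ⟨(H.vmap u, K.vmap u), (hd1.2.2.1 u).symm.trans (hd2.2.2.1 u)⟩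
  cmap α := ⟨(H.cmap α, K.cmap α), (hd1.2.2.2.1 α).symm.trans (hd2.2.2.2.1 α)⟩
  hmap_id x := pbHor_ext (H.hmap_id x) (K.hmap_id x)
  hmap_comp f g := pbHor_ext (H.hmap_comp f g) (K.hmap_comp f g)
  cmap_cid u :=
    pbCell_heq rfl rfl rfl rfl
      (heq_of_eq (pbHor_ext (H.hmap_id _) (K.hmap_id _))) HEq.rfl HEq.rfl
      (heq_of_eq (pbHor_ext (H.hmap_id _) (K.hmap_id _)))
      (H.cmap_cid u) (K.cmap_cid u)
  cmap_chcomp α β :=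
    pbCell_heq rfl rfl rfl rfl
      (heq_of_eq (pbHor_ext (H.hmap_comp _ _) (K.hmap_comp _ _))) HEq.rfl HEq.rfl
      (heq_of_eq (pbHor_ext (H.hmap_comp _ _) (K.hmap_comp _ _)))
      (H.cmap_chcomp α β) (K.cmap_chcomp α β)
  laxid x := ⟨(H.laxid x, K.laxid x), by
    have a1 : HEq (C.chcomp (F.laxid (H.obj x)) (F.cmap (H.laxid x)))
        (F.cmap (H.laxid x)) :=
      cid_chcomp' rfl rfl (hF.1 _).symm _ (hF.2.2.1 _) _
    have a2 : HEq (C.chcomp (G.laxid (K.obj x)) (G.cmap (K.laxid x)))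
        (G.cmap (K.laxid x)) :=
      cid_chcomp' rfl rfl (hG.1 _).symm _ (hG.2.2.1 _) _
    exact a1.symm.trans ((hd1.2.2.2.2.1 x).symm.trans ((hd2.2.2.2.2.1 x).trans a2))⟩
  laxcomp u v := ⟨(H.laxcomp u v, K.laxcomp u v), by
    have a1 : HEq (C.chcomp (F.laxcomp (H.vmap u) (H.vmap v)) (F.cmap (H.laxcomp u v)))
        (F.cmap (H.laxcomp u v)) :=
      cid_chcomp' rfl rfl (hF.2.1 _ _).symm _ (hF.2.2.2 _ _) _
    have a2 : HEq (C.chcomp (G.laxcomp (K.vmap u) (K.vmap v)) (G.cmap (K.laxcomp u v)))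
        (G.cmap (K.laxcomp u v)) :=
      cid_chcomp' rfl rfl (hG.2.1 _ _).symm _ (hG.2.2.2 _ _) _
    exact a1.symm.trans ((hd1.2.2.2.2.2 u v).symm.trans ((hd2.2.2.2.2.2 u v).trans a2))⟩
  laxid_nat f :=
    pbCell_heq rfl rfl rfl rfl
      (heq_of_eq (pbHor_ext ((A.hid_comp _).trans (A.hcomp_id _).symm)
        ((B.hid_comp _).trans (B.hcomp_id _).symm))) HEq.rfl HEq.rfl
      (heq_of_eq (pbHor_ext ((A.hid_comp _).trans (A.hcomp_id _).symm)
        ((B.hid_comp _).trans (B.hcomp_id _).symm)))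
      (H.laxid_nat f) (K.laxid_nat f)
  laxcomp_nat α β :=
    pbCell_heq rfl rfl rfl rfl
      (heq_of_eq (pbHor_ext ((A.hid_comp _).trans (A.hcomp_id _).symm)
        ((B.hid_comp _).trans (B.hcomp_id _).symm))) HEq.rfl HEq.rfl
      (heq_of_eq (pbHor_ext ((A.hid_comp _).trans (A.hcomp_id _).symm)
        ((B.hid_comp _).trans (B.hcomp_id _).symm)))
      (H.laxcomp_nat α β) (K.laxcomp_nat α β)
  lax_lunit u :=
    pbCell_heq rfl rfl rfl rfl
      (heq_of_eq (pbHor_ext (by show A.hcomp (A.hid _) (A.hcomp (A.hid _) (H.hmap (X.hid _))) = A.hid _; rw [H.hmap_id, A.hid_comp, A.hid_comp])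
        (by show B.hcomp (B.hid _) (B.hcomp (B.hid _) (K.hmap (X.hid _))) = B.hid _; rw [K.hmap_id, B.hid_comp, B.hid_comp]))) HEq.rfl HEq.rfl
      (heq_of_eq (pbHor_ext (by show A.hcomp (A.hid _) (A.hcomp (A.hid _) (H.hmap (X.hid _))) = A.hid _; rw [H.hmap_id, A.hid_comp, A.hid_comp])
        (by show B.hcomp (B.hid _) (B.hcomp (B.hid _) (K.hmap (X.hid _))) = B.hid _; rw [K.hmap_id, B.hid_comp, B.hid_comp])))
      (H.lax_lunit u) (K.lax_lunit u)
  lax_runit u :=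
    pbCell_heq rfl rfl rfl rfl
      (heq_of_eq (pbHor_ext (by show A.hcomp (A.hid _) (A.hcomp (A.hid _) (H.hmap (X.hid _))) = A.hid _; rw [H.hmap_id, A.hid_comp, A.hid_comp])
        (by show B.hcomp (B.hid _) (B.hcomp (B.hid _) (K.hmap (X.hid _))) = B.hid _; rw [K.hmap_id, B.hid_comp, B.hid_comp]))) HEq.rfl HEq.rfl
      (heq_of_eq (pbHor_ext (by show A.hcomp (A.hid _) (A.hcomp (A.hid _) (H.hmap (X.hid _))) = A.hid _; rw [H.hmap_id, A.hid_comp, A.hid_comp])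
        (by show B.hcomp (B.hid _) (B.hcomp (B.hid _) (K.hmap (X.hid _))) = B.hid _; rw [K.hmap_id, B.hid_comp, B.hid_comp])))
      (H.lax_runit u) (K.lax_runit u)
  lax_assoc u v w :=
    pbCell_heq rfl rfl rfl rfl
      (heq_of_eq (pbHor_ext (by show A.hcomp (A.hid _) (A.hcomp (A.hid _) (A.hid _)) = A.hcomp (A.hid _) (A.hcomp (A.hid _) (H.hmap (X.hid _))); rw [H.hmap_id]) (by show B.hcomp (B.hid _) (B.hcomp (B.hid _) (B.hid _)) = B.hcomp (B.hid _) (B.hcomp (B.hid _) (K.hmap (X.hid _))); rw [K.hmap_id]))) HEq.rfl HEq.rfl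
      (heq_of_eq (pbHor_ext (by show A.hcomp (A.hid _) (A.hcomp (A.hid _) (A.hid _)) = A.hcomp (A.hid _) (A.hcomp (A.hid _) (H.hmap (X.hid _))); rw [H.hmap_id]) (by show B.hcomp (B.hid _) (B.hcomp (B.hid _) (B.hid _)) = B.hcomp (B.hid _) (B.hcomp (B.hid _) (K.hmap (X.hid _))); rw [K.hmap_id])))
      (H.lax_assoc u v w) (K.lax_assoc u v w)

end Lift


section TwoDim

variable {A B C : WeakDoubleCat.{u}} {F : LaxDblFunctor A C} {G : LaxDblFunctor B C}
variable (hF : F.IsStrict) (hG : G.IsStrict)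

theorem spec_laxid_val1 {X : WeakDoubleCat.{u}} {L : LaxDblFunctor X (pbCat hF hG)}
    {H : LaxDblFunctor X A} (hLH : LaxCompSpec L (pbP hF hG) H) (a : X.Obj) :
    HEq ((L.laxid a).val.1) (H.laxid a) :=
  ((hLH.2.2.2.2.1 a).trans (A.cid_chcomp _)).symm

theorem spec_laxid_val2 {X : WeakDoubleCat.{u}} {L : LaxDblFunctor X (pbCat hF hG)}
    {K : LaxDblFunctor X B} (hLK : LaxCompSpec L (pbQ hF hG) K) (a : X.Obj) :
    HEq ((L.laxid a).val.2) (K.laxid a) :=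
  ((hLK.2.2.2.2.1 a).trans (B.cid_chcomp _)).symm

theorem spec_laxcomp_val1 {X : WeakDoubleCat.{u}} {L : LaxDblFunctor X (pbCat hF hG)}
    {H : LaxDblFunctor X A} (hLH : LaxCompSpec L (pbP hF hG) H)
    {a b c : X.Obj} (u : X.Ver a b) (v : X.Ver b c) :
    HEq ((L.laxcomp u v).val.1) (H.laxcomp u v) :=
  ((hLH.2.2.2.2.2 u v).trans (A.cid_chcomp _)).symm

theorem spec_laxcomp_val2 {X : WeakDoubleCat.{u}} {L : LaxDblFunctor X (pbCat hF hG)}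
    {K : LaxDblFunctor X B} (hLK : LaxCompSpec L (pbQ hF hG) K)
    {a b c : X.Obj} (u : X.Ver a b) (v : X.Ver b c) :
    HEq ((L.laxcomp u v).val.2) (K.laxcomp u v) :=
  ((hLK.2.2.2.2.2 u v).trans (B.cid_chcomp _)).symm

variable {X : WeakDoubleCat.{u}} {L M : LaxDblFunctor X (pbCat hF hG)}
variable {H H' : LaxDblFunctor X A} {K K' : LaxDblFunctor X B}
variable (hLH : LaxCompSpec L (pbP hF hG) H) (hMH : LaxCompSpec M (pbP hF hG) H')
variable (hLK : LaxCompSpec L (pbQ hF hG) K) (hMK : LaxCompSpec M (pbQ hF hG) K')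
variable (α : HorizTransf H H') (β : HorizTransf K K')
variable (hb : ∀ x, HEq (F.hmap (α.app x)) (G.hmap (β.app x)))
variable (hc : ∀ {x y} (u : X.Ver x y),
  HEq (F.cmap (α.cellapp u)) (G.cmap (β.cellapp u)))

def pbTApp (x : X.Obj) : (pbCat hF hG).Hor (L.obj x) (M.obj x) :=
  ⟨(cast (hor_type_congr (hLH.1 x) (hMH.1 x)) (α.app x),
    cast (hor_type_congr (hLK.1 x) (hMK.1 x)) (β.app x)),
   (F.hmap_heq (hLH.1 x).symm (hMH.1 x).symm (cast_heq _ _)).trans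
     ((hb x).trans (G.hmap_heq (hLK.1 x) (hMK.1 x) (cast_heq _ _).symm))⟩

theorem pbTApp_heq1 (x : X.Obj) :
    HEq (pbTApp hF hG hLH hMH hLK hMK α β hb x).val.1 (α.app x) := cast_heq _ _

theorem pbTApp_heq2 (x : X.Obj) :
    HEq (pbTApp hF hG hLH hMH hLK hMK α β hb x).val.2 (β.app x) := cast_heq _ _

def pbTCell {x y : X.Obj} (u : X.Ver x y) :
    (pbCat hF hG).Cell (pbTApp hF hG hLH hMH hLK hMK α β hb x) (L.vmap u) (M.vmap u)
      (pbTApp hF hG hLH hMH hLK hMK α β hb y) :=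
  ⟨(cast (cell_type_congr (hLH.1 x) (hMH.1 x) (hLH.1 y) (hMH.1 y)
      (pbTApp_heq1 hF hG hLH hMH hLK hMK α β hb x).symm (hLH.2.2.1 u) (hMH.2.2.1 u)
      (pbTApp_heq1 hF hG hLH hMH hLK hMK α β hb y).symm) (α.cellapp u),
    cast (cell_type_congr (hLK.1 x) (hMK.1 x) (hLK.1 y) (hMK.1 y)
      (pbTApp_heq2 hF hG hLH hMH hLK hMK α β hb x).symm (hLK.2.2.1 u) (hMK.2.2.1 u)
      (pbTApp_heq2 hF hG hLH hMH hLK hMK α β hb y).symm) (β.cellapp u)),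
   (F.cmap_heq (hLH.1 x).symm (hMH.1 x).symm (hLH.1 y).symm (hMH.1 y).symm
      (pbTApp_heq1 hF hG hLH hMH hLK hMK α β hb x) (hLH.2.2.1 u).symm
      (hMH.2.2.1 u).symm (pbTApp_heq1 hF hG hLH hMH hLK hMK α β hb y)
      (cast_heq _ _)).trans
     ((hc u).trans
       (G.cmap_heq (hLK.1 x) (hMK.1 x) (hLK.1 y) (hMK.1 y)
         (pbTApp_heq2 hF hG hLH hMH hLK hMK α β hb x).symm (hLK.2.2.1 u)
         (hMK.2.2.1 u) (pbTApp_heq2 hF hG hLH hMH hLK hMK α β hb y).symm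
         (cast_heq _ _).symm))⟩

theorem pbTCell_heq1 {x y : X.Obj} (u : X.Ver x y) :
    HEq (pbTCell hF hG hLH hMH hLK hMK α β hb hc u).val.1 (α.cellapp u) := cast_heq _ _

theorem pbTCell_heq2 {x y : X.Obj} (u : X.Ver x y) :
    HEq (pbTCell hF hG hLH hMH hLK hMK α β hb hc u).val.2 (β.cellapp u) := cast_heq _ _

theorem pbT_hnat {x y : X.Obj} (f : X.Hor x y) :
    (pbCat hF hG).hcomp (L.hmap f) (pbTApp hF hG hLH hMH hLK hMK α β hb y)
      = (pbCat hF hG).hcomp (pbTApp hF hG hLH hMH hLK hMK α β hb x) (M.hmap f) := by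
  refine pbHor_ext (eq_of_heq ?_) (eq_of_heq ?_)
  · refine HEq.trans (HEq.trans ?_ (heq_of_eq (α.hnat f))) ?_
    · exact hcomp_heq (hLH.1 x).symm (hLH.1 y).symm (hMH.1 y).symm
        (hLH.2.1 f).symm (pbTApp_heq1 hF hG hLH hMH hLK hMK α β hb y)
    · exact hcomp_heq (hLH.1 x) (hMH.1 x) (hMH.1 y)
        (pbTApp_heq1 hF hG hLH hMH hLK hMK α β hb x).symm (hMH.2.1 f)
  · refine HEq.trans (HEq.trans ?_ (heq_of_eq (β.hnat f))) ?_
    · exact hcomp_heq (hLK.1 x).symm (hLK.1 y).symm (hMK.1 y).symm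
        (hLK.2.1 f).symm (pbTApp_heq2 hF hG hLH hMH hLK hMK α β hb y)
    · exact hcomp_heq (hLK.1 x) (hMK.1 x) (hMK.1 y)
        (pbTApp_heq2 hF hG hLH hMH hLK hMK α β hb x).symm (hMK.2.1 f)

def pbTrans : HorizTransf L M where
  app := pbTApp hF hG hLH hMH hLK hMK α β hb
  cellapp u := pbTCell hF hG hLH hMH hLK hMK α β hb hc u
  hnat f := pbT_hnat hF hG hLH hMH hLK hMK α β hb f
  cellnat := fun {x y x' y'} {f u v g} α' => by
    refine pbCell_heq rfl rfl rfl rfl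
      (heq_of_eq (pbT_hnat hF hG hLH hMH hLK hMK α β hb f)) HEq.rfl HEq.rfl
      (heq_of_eq (pbT_hnat hF hG hLH hMH hLK hMK α β hb g)) ?_ ?_
    · refine HEq.trans (HEq.trans ?_ (α.cellnat α')) ?_
      · exact chcomp_heq (hLH.1 x).symm (hLH.1 y).symm (hMH.1 y).symm
          (hLH.1 x').symm (hLH.1 y').symm (hMH.1 y').symm
          (hLH.2.1 f).symm (pbTApp_heq1 hF hG hLH hMH hLK hMK α β hb y)
          (hLH.2.2.1 u).symm (hLH.2.2.1 v).symm (hMH.2.2.1 v).symm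
          (hLH.2.1 g).symm (pbTApp_heq1 hF hG hLH hMH hLK hMK α β hb y')
          (hLH.2.2.2.1 α').symm (pbTCell_heq1 hF hG hLH hMH hLK hMK α β hb hc v)
      · exact chcomp_heq (hLH.1 x) (hMH.1 x) (hMH.1 y) (hLH.1 x') (hMH.1 x') (hMH.1 y')
          (pbTApp_heq1 hF hG hLH hMH hLK hMK α β hb x).symm (hMH.2.1 f)
          (hLH.2.2.1 u) (hMH.2.2.1 u) (hMH.2.2.1 v)
          (pbTApp_heq1 hF hG hLH hMH hLK hMK α β hb x').symm (hMH.2.1 g)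
          (pbTCell_heq1 hF hG hLH hMH hLK hMK α β hb hc u).symm (hMH.2.2.2.1 α')
    · refine HEq.trans (HEq.trans ?_ (β.cellnat α')) ?_
      · exact chcomp_heq (hLK.1 x).symm (hLK.1 y).symm (hMK.1 y).symm
          (hLK.1 x').symm (hLK.1 y').symm (hMK.1 y').symm
          (hLK.2.1 f).symm (pbTApp_heq2 hF hG hLH hMH hLK hMK α β hb y)
          (hLK.2.2.1 u).symm (hLK.2.2.1 v).symm (hMK.2.2.1 v).symm
          (hLK.2.1 g).symm (pbTApp_heq2 hF hG hLH hMH hLK hMK α β hb y')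
          (hLK.2.2.2.1 α').symm (pbTCell_heq2 hF hG hLH hMH hLK hMK α β hb hc v)
      · exact chcomp_heq (hLK.1 x) (hMK.1 x) (hMK.1 y) (hLK.1 x') (hMK.1 x') (hMK.1 y')
          (pbTApp_heq2 hF hG hLH hMH hLK hMK α β hb x).symm (hMK.2.1 f)
          (hLK.2.2.1 u) (hMK.2.2.1 u) (hMK.2.2.1 v)
          (pbTApp_heq2 hF hG hLH hMH hLK hMK α β hb x').symm (hMK.2.1 g)
          (pbTCell_heq2 hF hG hLH hMH hLK hMK α β hb hc u).symm (hMK.2.2.2.1 α')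
  unit_compat := fun a => by
    refine pbCell_heq rfl rfl rfl rfl
      (heq_of_eq (pbHor_ext ((A.hid_comp _).trans (A.hcomp_id _).symm)
        ((B.hid_comp _).trans (B.hcomp_id _).symm))) HEq.rfl HEq.rfl
      (heq_of_eq (pbHor_ext ((A.hid_comp _).trans (A.hcomp_id _).symm)
        ((B.hid_comp _).trans (B.hcomp_id _).symm))) ?_ ?_
    · refine HEq.trans (HEq.trans ?_ (α.unit_compat a)) ?_
      · exact chcomp_heq (hLH.1 a).symm (hLH.1 a).symm (hMH.1 a).symm
          (hLH.1 a).symm (hLH.1 a).symm (hMH.1 a).symm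
          (hid_heq (hLH.1 a).symm) (pbTApp_heq1 hF hG hLH hMH hLK hMK α β hb a)
          (vid_heq (hLH.1 a).symm) (hLH.2.2.1 (X.vid a)).symm
          (hMH.2.2.1 (X.vid a)).symm (hid_heq (hLH.1 a).symm)
          (pbTApp_heq1 hF hG hLH hMH hLK hMK α β hb a)
          (spec_laxid_val1 hF hG hLH a)
          (pbTCell_heq1 hF hG hLH hMH hLK hMK α β hb hc (X.vid a))
      · exact chcomp_heq (hLH.1 a) (hMH.1 a) (hMH.1 a) (hLH.1 a) (hMH.1 a) (hMH.1 a)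
          (pbTApp_heq1 hF hG hLH hMH hLK hMK α β hb a).symm (hid_heq (hMH.1 a))
          (vid_heq (hLH.1 a)) (vid_heq (hMH.1 a)) (hMH.2.2.1 (X.vid a))
          (pbTApp_heq1 hF hG hLH hMH hLK hMK α β hb a).symm (hid_heq (hMH.1 a))
          (idcell_heq (hLH.1 a) (hMH.1 a)
            (pbTApp_heq1 hF hG hLH hMH hLK hMK α β hb a).symm)
          (spec_laxid_val1 hF hG hMH a).symm
    · refine HEq.trans (HEq.trans ?_ (β.unit_compat a)) ?_
      · exact chcomp_heq (hLK.1 a).symm (hLK.1 a).symm (hMK.1 a).symm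
          (hLK.1 a).symm (hLK.1 a).symm (hMK.1 a).symm
          (hid_heq (hLK.1 a).symm) (pbTApp_heq2 hF hG hLH hMH hLK hMK α β hb a)
          (vid_heq (hLK.1 a).symm) (hLK.2.2.1 (X.vid a)).symm
          (hMK.2.2.1 (X.vid a)).symm (hid_heq (hLK.1 a).symm)
          (pbTApp_heq2 hF hG hLH hMH hLK hMK α β hb a)
          (spec_laxid_val2 hF hG hLK a)
          (pbTCell_heq2 hF hG hLH hMH hLK hMK α β hb hc (X.vid a))
      · exact chcomp_heq (hLK.1 a) (hMK.1 a) (hMK.1 a) (hLK.1 a) (hMK.1 a) (hMK.1 a)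
          (pbTApp_heq2 hF hG hLH hMH hLK hMK α β hb a).symm (hid_heq (hMK.1 a))
          (vid_heq (hLK.1 a)) (vid_heq (hMK.1 a)) (hMK.2.2.1 (X.vid a))
          (pbTApp_heq2 hF hG hLH hMH hLK hMK α β hb a).symm (hid_heq (hMK.1 a))
          (idcell_heq (hLK.1 a) (hMK.1 a)
            (pbTApp_heq2 hF hG hLH hMH hLK hMK α β hb a).symm)
          (spec_laxid_val2 hF hG hMK a).symm
  comp_compat := fun {a b c} u v => by
    refine pbCell_heq rfl rfl rfl rfl
      (heq_of_eq (pbHor_ext ((A.hid_comp _).trans (A.hcomp_id _).symm)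
        ((B.hid_comp _).trans (B.hcomp_id _).symm))) HEq.rfl HEq.rfl
      (heq_of_eq (pbHor_ext ((A.hid_comp _).trans (A.hcomp_id _).symm)
        ((B.hid_comp _).trans (B.hcomp_id _).symm))) ?_ ?_
    · refine HEq.trans (HEq.trans ?_ (α.comp_compat u v)) ?_
      · exact chcomp_heq (hLH.1 a).symm (hLH.1 a).symm (hMH.1 a).symm
          (hLH.1 c).symm (hLH.1 c).symm (hMH.1 c).symm
          (hid_heq (hLH.1 a).symm) (pbTApp_heq1 hF hG hLH hMH hLK hMK α β hb a)
          (vcomp_heq (hLH.1 a).symm (hLH.1 b).symm (hLH.1 c).symm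
            (hLH.2.2.1 u).symm (hLH.2.2.1 v).symm)
          (hLH.2.2.1 (X.vcomp u v)).symm (hMH.2.2.1 (X.vcomp u v)).symm
          (hid_heq (hLH.1 c).symm) (pbTApp_heq1 hF hG hLH hMH hLK hMK α β hb c)
          (spec_laxcomp_val1 hF hG hLH u v)
          (pbTCell_heq1 hF hG hLH hMH hLK hMK α β hb hc (X.vcomp u v))
      · exact chcomp_heq (hLH.1 a) (hMH.1 a) (hMH.1 a) (hLH.1 c) (hMH.1 c) (hMH.1 c)
          (pbTApp_heq1 hF hG hLH hMH hLK hMK α β hb a).symm (hid_heq (hMH.1 a))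
          (vcomp_heq (hLH.1 a) (hLH.1 b) (hLH.1 c) (hLH.2.2.1 u) (hLH.2.2.1 v))
          (vcomp_heq (hMH.1 a) (hMH.1 b) (hMH.1 c) (hMH.2.2.1 u) (hMH.2.2.1 v))
          (hMH.2.2.1 (X.vcomp u v))
          (pbTApp_heq1 hF hG hLH hMH hLK hMK α β hb c).symm (hid_heq (hMH.1 c))
          (cvcomp_heq (hLH.1 a) (hMH.1 a) (hLH.1 b) (hMH.1 b) (hLH.1 c) (hMH.1 c)
            (pbTApp_heq1 hF hG hLH hMH hLK hMK α β hb a).symm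
            (hLH.2.2.1 u) (hMH.2.2.1 u)
            (pbTApp_heq1 hF hG hLH hMH hLK hMK α β hb b).symm
            (hLH.2.2.1 v) (hMH.2.2.1 v)
            (pbTApp_heq1 hF hG hLH hMH hLK hMK α β hb c).symm
            (pbTCell_heq1 hF hG hLH hMH hLK hMK α β hb hc u).symm
            (pbTCell_heq1 hF hG hLH hMH hLK hMK α β hb hc v).symm)
          (spec_laxcomp_val1 hF hG hMH u v).symm
    · refine HEq.trans (HEq.trans ?_ (β.comp_compat u v)) ?_
      · exact chcomp_heq (hLK.1 a).symm (hLK.1 a).symm (hMK.1 a).symm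
          (hLK.1 c).symm (hLK.1 c).symm (hMK.1 c).symm
          (hid_heq (hLK.1 a).symm) (pbTApp_heq2 hF hG hLH hMH hLK hMK α β hb a)
          (vcomp_heq (hLK.1 a).symm (hLK.1 b).symm (hLK.1 c).symm
            (hLK.2.2.1 u).symm (hLK.2.2.1 v).symm)
          (hLK.2.2.1 (X.vcomp u v)).symm (hMK.2.2.1 (X.vcomp u v)).symm
          (hid_heq (hLK.1 c).symm) (pbTApp_heq2 hF hG hLH hMH hLK hMK α β hb c)
          (spec_laxcomp_val2 hF hG hLK u v)
          (pbTCell_heq2 hF hG hLH hMH hLK hMK α β hb hc (X.vcomp u v))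
      · exact chcomp_heq (hLK.1 a) (hMK.1 a) (hMK.1 a) (hLK.1 c) (hMK.1 c) (hMK.1 c)
          (pbTApp_heq2 hF hG hLH hMH hLK hMK α β hb a).symm (hid_heq (hMK.1 a))
          (vcomp_heq (hLK.1 a) (hLK.1 b) (hLK.1 c) (hLK.2.2.1 u) (hLK.2.2.1 v))
          (vcomp_heq (hMK.1 a) (hMK.1 b) (hMK.1 c) (hMK.2.2.1 u) (hMK.2.2.1 v))
          (hMK.2.2.1 (X.vcomp u v))
          (pbTApp_heq2 hF hG hLH hMH hLK hMK α β hb c).symm (hid_heq (hMK.1 c))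
          (cvcomp_heq (hLK.1 a) (hMK.1 a) (hLK.1 b) (hMK.1 b) (hLK.1 c) (hMK.1 c)
            (pbTApp_heq2 hF hG hLH hMH hLK hMK α β hb a).symm
            (hLK.2.2.1 u) (hMK.2.2.1 u)
            (pbTApp_heq2 hF hG hLH hMH hLK hMK α β hb b).symm
            (hLK.2.2.1 v) (hMK.2.2.1 v)
            (pbTApp_heq2 hF hG hLH hMH hLK hMK α β hb c).symm
            (pbTCell_heq2 hF hG hLH hMH hLK hMK α β hb hc u).symm
            (pbTCell_heq2 hF hG hLH hMH hLK hMK α β hb hc v).symm)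
          (spec_laxcomp_val2 hF hG hMK u v).symm

end TwoDim


/-- Let `F : 𝔸 → ℂ` and `G : 𝔹 → ℂ` be strict functors
between weak double categories.  Then the set-theoretical pullback of `F` and
`G` on objects, horizontal arrows, vertical arrows and double cells defines a
weak double category `𝔸 ×_ℂ 𝔹` which is the 2-pullback of `F` and `G` in the
2-category `LxDbl` (weak double categories, lax double functors, horizontal
transformations); moreover the two projections onto `𝔸` and `𝔹` are strict
functors. -/
theorem pullback_of_strict_functors (A B C : WeakDoubleCat.{u})
    (F : LaxDblFunctor A C) (G : LaxDblFunctor B C)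
    (hF : F.IsStrict) (hG : G.IsStrict) :
    ∃ (P : WeakDoubleCat.{u}) (hcar : P.toDblData = pbData F G)
      (p : LaxDblFunctor P A) (q : LaxDblFunctor P B),
      -- `P` is, set-theoretically, the pullback, and `p`, `q` are the strict
      -- projection functors
      IsSetPullback F G P hcar p q ∧
      -- the square commutes:  F ∘ p = G ∘ q
      (∃ c : LaxDblFunctor P C, LaxCompSpec p F c ∧ LaxCompSpec q G c) ∧
      -- 1-dimensional universal property of the 2-pullback in LxDbl
      (∀ (X : WeakDoubleCat.{u}) (H : LaxDblFunctor X A) (K : LaxDblFunctor X B),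
        (∃ d : LaxDblFunctor X C, LaxCompSpec H F d ∧ LaxCompSpec K G d) →
        ∃! L : LaxDblFunctor X P, LaxCompSpec L p H ∧ LaxCompSpec L q K) ∧
      -- 2-dimensional universal property of the 2-pullback in LxDbl
      (∀ (X : WeakDoubleCat.{u}) (L M : LaxDblFunctor X P)
        (H H' : LaxDblFunctor X A) (K K' : LaxDblFunctor X B),
        LaxCompSpec L p H → LaxCompSpec M p H' →
        LaxCompSpec L q K → LaxCompSpec M q K' →
        ∀ (α : HorizTransf H H') (β : HorizTransf K K'),
          (∀ x, HEq (F.hmap (α.app x)) (G.hmap (β.app x))) →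
          (∀ {x y} (u : X.Ver x y), HEq (F.cmap (α.cellapp u)) (G.cmap (β.cellapp u))) →
          ∃! γ : HorizTransf L M,
            (∀ x, HEq (p.hmap (γ.app x)) (α.app x)) ∧
            (∀ {x y} (u : X.Ver x y), HEq (p.cmap (γ.cellapp u)) (α.cellapp u)) ∧
            (∀ x, HEq (q.hmap (γ.app x)) (β.app x)) ∧
            (∀ {x y} (u : X.Ver x y), HEq (q.cmap (γ.cellapp u)) (β.cellapp u))) := by
  refine ⟨pbCat hF hG, rfl, pbP hF hG, pbQ hF hG, ?_, ?_, ?_, ?_⟩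
  · -- set-theoretical pullback with strict projections
    exact ⟨⟨fun x => rfl, fun u v => rfl, fun x => HEq.rfl, fun u v => HEq.rfl⟩,
      ⟨fun x => rfl, fun u v => rfl, fun x => HEq.rfl, fun u v => HEq.rfl⟩,
      fun x => rfl, fun x => rfl, HEq.rfl, HEq.rfl, HEq.rfl, HEq.rfl, HEq.rfl, HEq.rfl⟩
  · -- the commuting square
    refine ⟨pbDiag hF hG, ⟨fun x => rfl, fun f => HEq.rfl, fun u => HEq.rfl,
      fun α => HEq.rfl, ?_, ?_⟩, ⟨fun x => x.prop, fun f => f.prop, fun u => u.prop,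
      fun α => α.prop, ?_, ?_⟩⟩
    · intro x
      have s1 : HEq (C.chcomp (F.laxid x.val.1) (F.cmap (A.cid (A.vid x.val.1))))
          (F.cmap (A.cid (A.vid x.val.1))) :=
        cid_chcomp' rfl rfl (hF.1 _).symm _ (hF.2.2.1 _) _
      have s2 : HEq (F.cmap (A.cid (A.vid x.val.1))) (C.cid (F.vmap (A.vid x.val.1))) :=
        F.cmap_cid _
      have s3 : HEq (C.cid (F.vmap (A.vid x.val.1))) (C.cid (C.vid (F.obj x.val.1))) :=
        cid_heq rfl rfl (heq_of_eq (hF.1 _))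
      exact (diagLaxid_heq hF x).trans (((s1.trans s2).trans s3).symm)
    · intro a b c u v
      have s1 : HEq (C.chcomp (F.laxcomp u.val.1 v.val.1)
          (F.cmap (A.cid (A.vcomp u.val.1 v.val.1))))
          (F.cmap (A.cid (A.vcomp u.val.1 v.val.1))) :=
        cid_chcomp' rfl rfl (hF.2.1 _ _).symm _ (hF.2.2.2 _ _) _
      have s2 : HEq (F.cmap (A.cid (A.vcomp u.val.1 v.val.1)))
          (C.cid (F.vmap (A.vcomp u.val.1 v.val.1))) := F.cmap_cid _
      have s3 : HEq (C.cid (F.vmap (A.vcomp u.val.1 v.val.1)))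
          (C.cid (C.vcomp (F.vmap u.val.1) (F.vmap v.val.1))) :=
        cid_heq rfl rfl (heq_of_eq (hF.2.1 _ _))
      exact (diagLaxcomp_heq hF u v).trans (((s1.trans s2).trans s3).symm)
    · intro x
      have s1 : HEq (C.chcomp (G.laxid x.val.2) (G.cmap (B.cid (B.vid x.val.2))))
          (G.cmap (B.cid (B.vid x.val.2))) :=
        cid_chcomp' rfl rfl (hG.1 _).symm _ (hG.2.2.1 _) _
      have s2 : HEq (G.cmap (B.cid (B.vid x.val.2))) (C.cid (G.vmap (B.vid x.val.2))) :=
        G.cmap_cid _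
      have s3 : HEq (C.cid (G.vmap (B.vid x.val.2))) (C.cid (C.vid (G.obj x.val.2))) :=
        cid_heq rfl rfl (heq_of_eq (hG.1 _))
      have s4 : HEq (C.cid (C.vid (F.obj x.val.1))) (C.cid (C.vid (G.obj x.val.2))) :=
        cid_heq x.prop x.prop (vid_heq x.prop)
      exact ((diagLaxid_heq hF x).trans s4).trans (((s1.trans s2).trans s3).symm)
    · intro a b c u v
      have s1 : HEq (C.chcomp (G.laxcomp u.val.2 v.val.2)
          (G.cmap (B.cid (B.vcomp u.val.2 v.val.2))))
          (G.cmap (B.cid (B.vcomp u.val.2 v.val.2))) :=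
        cid_chcomp' rfl rfl (hG.2.1 _ _).symm _ (hG.2.2.2 _ _) _
      have s2 : HEq (G.cmap (B.cid (B.vcomp u.val.2 v.val.2)))
          (C.cid (G.vmap (B.vcomp u.val.2 v.val.2))) := G.cmap_cid _
      have s3 : HEq (C.cid (G.vmap (B.vcomp u.val.2 v.val.2)))
          (C.cid (C.vcomp (G.vmap u.val.2) (G.vmap v.val.2))) :=
        cid_heq rfl rfl (heq_of_eq (hG.2.1 _ _))
      have s4 : HEq (C.cid (C.vcomp (F.vmap u.val.1) (F.vmap v.val.1)))
          (C.cid (C.vcomp (G.vmap u.val.2) (G.vmap v.val.2))) :=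
        cid_heq a.prop c.prop (vcomp_heq a.prop b.prop c.prop u.prop v.prop)
      exact ((diagLaxcomp_heq hF u v).trans s4).trans (((s1.trans s2).trans s3).symm)
  · -- 1-dimensional universal property
    rintro X H K ⟨d, hd1, hd2⟩
    refine ⟨pbLift hF hG H K d hd1 hd2,
      ⟨⟨fun x => rfl, fun f => HEq.rfl, fun u => HEq.rfl, fun α => HEq.rfl,
        fun x => (A.cid_chcomp _).symm, fun u v => (A.cid_chcomp _).symm⟩,
       ⟨fun x => rfl, fun f => HEq.rfl, fun u => HEq.rfl, fun α => HEq.rfl,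
        fun x => (B.cid_chcomp _).symm, fun u v => (B.cid_chcomp _).symm⟩⟩, ?_⟩
    rintro L' ⟨hL'p, hL'q⟩
    have h0 : ∀ a, L'.obj a = (pbLift hF hG H K d hd1 hd2).obj a := fun a =>
      Subtype.ext (Prod.ext (hL'p.1 a).symm (hL'q.1 a).symm)
    have h1 : ∀ {a b} (f : X.Hor a b),
        HEq (L'.hmap f) ((pbLift hF hG H K d hd1 hd2).hmap f) := fun f =>
      pbHor_heq (h0 _) (h0 _) (hL'p.2.1 f).symm (hL'q.2.1 f).symm
    have h2 : ∀ {a b} (u : X.Ver a b),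
        HEq (L'.vmap u) ((pbLift hF hG H K d hd1 hd2).vmap u) := fun u =>
      pbVer_heq (h0 _) (h0 _) (hL'p.2.2.1 u).symm (hL'q.2.2.1 u).symm
    refine LaxDblFunctor.ext' h0 h1 h2 ?_ ?_ ?_
    · intro a b a' b' f u v g α
      exact pbCell_heq (h0 a) (h0 b) (h0 a') (h0 b') (h1 f) (h2 u) (h2 v) (h1 g)
        (hL'p.2.2.2.1 α).symm (hL'q.2.2.2.1 α).symm
    · intro a
      exact pbCell_heq (h0 a) (h0 a) (h0 a) (h0 a) (hid_heq (h0 a)) (vid_heq (h0 a))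
        (h2 (X.vid a)) (hid_heq (h0 a))
        ((hL'p.2.2.2.2.1 a).trans (A.cid_chcomp _)).symm
        ((hL'q.2.2.2.2.1 a).trans (B.cid_chcomp _)).symm
    · intro a b c u v
      exact pbCell_heq (h0 a) (h0 a) (h0 c) (h0 c) (hid_heq (h0 a))
        (vcomp_heq (h0 a) (h0 b) (h0 c) (h2 u) (h2 v)) (h2 (X.vcomp u v))
        (hid_heq (h0 c))
        ((hL'p.2.2.2.2.2 u v).trans (A.cid_chcomp _)).symm
        ((hL'q.2.2.2.2.2 u v).trans (B.cid_chcomp _)).symm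
  · -- 2-dimensional universal property
    intro X L M H H' K K' hLH hMH hLK hMK α β hb hc
    refine ⟨pbTrans hF hG hLH hMH hLK hMK α β hb hc,
      ⟨fun x => pbTApp_heq1 hF hG hLH hMH hLK hMK α β hb x,
       fun {x y} u => pbTCell_heq1 hF hG hLH hMH hLK hMK α β hb hc u,
       fun x => pbTApp_heq2 hF hG hLH hMH hLK hMK α β hb x,
       fun {x y} u => pbTCell_heq2 hF hG hLH hMH hLK hMK α β hb hc u⟩, ?_⟩
    rintro γ' ⟨c1, c2, c3, c4⟩
    have happ : ∀ a, γ'.app a = (pbTrans hF hG hLH hMH hLK hMK α β hb hc).app a :=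
      fun a => pbHor_ext
        (eq_of_heq ((c1 a).trans (pbTApp_heq1 hF hG hLH hMH hLK hMK α β hb a).symm))
        (eq_of_heq ((c3 a).trans (pbTApp_heq2 hF hG hLH hMH hLK hMK α β hb a).symm))
    refine HorizTransf.ext' happ ?_
    intro a b u
    exact pbCell_heq rfl rfl rfl rfl (heq_of_eq (happ a)) HEq.rfl HEq.rfl
      (heq_of_eq (happ b))
      ((c2 u).trans (pbTCell_heq1 hF hG hLH hMH hLK hMK α β hb hc u).symm)
      ((c4 u).trans (pbTCell_heq2 hF hG hLH hMH hLK hMK α β hb hc u).symm)
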